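/- arXiv:1703.08883 — 8 statements merged into one kernel-verified Lean document; each statement's English description precedes it below -/
import Mathlib

section
/- Let f, g : [a,b] → ℝ be integrable and for α ≤ β in [a,b] define the Čebyšev functional T_α^β(f,g) = (1/(β-α))∫_α^β f(t)g(t) dt − (1/(β-α))∫_α^β f(t) dt · (1/(β-α))∫_α^β g(t) dt. Then for all a ≤ u < v ≤ b, |T_a^v(f,g) − T_u^b(f,g)| ≤ (T_a^v(f,f))^{1/2}(T_a^v(g,g))^{1/2} + (T_u^b(f,f))^{1/2}(T_u^b(g,g))^{1/2}. -/
open MeasureTheory Set intervalIntegral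

/-- The Čebyšev functional on `[α, β]`. -/
noncomputable def cheb (f g : ℝ → ℝ) (α β : ℝ) : ℝ :=
  (β - α)⁻¹ * (∫ t in α..β, f t * g t) -
    ((β - α)⁻¹ * ∫ t in α..β, f t) * ((β - α)⁻¹ * ∫ t in α..β, g t)

/-- The total variation of `f` on `[a, b]`. -/
noncomputable def totalVar (f : ℝ → ℝ) (a b : ℝ) : ℝ :=
  (eVariationOn f (Icc a b)).toReal

/-- The essential supremum norm of `h` on `[a, b]`. -/
noncomputable def supNorm (h : ℝ → ℝ) (a b : ℝ) : ℝ :=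
  (eLpNorm h ⊤ (volume.restrict (Icc a b))).toReal

lemma cheb_self_nonneg (h : ℝ → ℝ) (α β : ℝ) (hab : α < β)
    (h1 : IntervalIntegrable h volume α β)
    (h2 : IntervalIntegrable (fun t => h t * h t) volume α β) :
    0 ≤ cheb h h α β := by
  have hL : (0:ℝ) < β - α := by linarith
  set c : ℝ := (β - α)⁻¹ * ∫ t in α..β, h t with hc
  have hic : IntervalIntegrable (fun t => (2*c) * h t) volume α β := h1.const_mul _
  have expand : (∫ t in α..β, (h t - c)*(h t - c))
      = (∫ t in α..β, h t * h t) - (2*c) * (∫ t in α..β, h t) + c^2 * (β - α) := by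
    have e : (fun t => (h t - c)*(h t - c))
        = fun t => (h t * h t - (2*c) * h t) + c^2 := by funext t; ring
    rw [e, intervalIntegral.integral_add (h2.sub hic) intervalIntegrable_const,
      intervalIntegral.integral_sub h2 hic, intervalIntegral.integral_const_mul,
      intervalIntegral.integral_const, smul_eq_mul]
    ring
  have pos : 0 ≤ ∫ t in α..β, (h t - c)*(h t - c) :=
    intervalIntegral.integral_nonneg (le_of_lt hab) (fun t _ => mul_self_nonneg _)
  have hI : (∫ t in α..β, h t) = c * (β - α) := by
    rw [hc, mul_comm, ← mul_assoc, mul_inv_cancel₀ hL.ne', one_mul]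
  rw [hI] at expand
  have hJ : c * c * (β - α) ≤ ∫ t in α..β, h t * h t := by nlinarith [pos, expand]
  have h4 := mul_le_mul_of_nonneg_left hJ (inv_pos.mpr hL).le
  have hc2 : (β - α)⁻¹ * (c * c * (β - α)) = c * c := by field_simp
  rw [hc2] at h4
  unfold cheb
  rw [← hc]
  linarith

lemma cheb_sq_le (f g : ℝ → ℝ) (α β : ℝ) (hab : α < β)
    (hf : IntervalIntegrable f volume α β) (hg : IntervalIntegrable g volume α β)
    (hfg : IntervalIntegrable (fun t => f t * g t) volume α β)
    (hff : IntervalIntegrable (fun t => f t * f t) volume α β)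
    (hgg : IntervalIntegrable (fun t => g t * g t) volume α β) :
    (cheb f g α β)^2 ≤ cheb f f α β * cheb g g α β := by
  have key : ∀ x : ℝ, 0 ≤ cheb g g α β * (x * x) + (2 * cheb f g α β) * x + cheb f f α β := by
    intro x
    have h1 : IntervalIntegrable (fun t => f t + x * g t) volume α β :=
      hf.add (hg.const_mul x)
    have h2 : IntervalIntegrable (fun t => (f t + x * g t) * (f t + x * g t)) volume α β := by
      have e : (fun t => (f t + x * g t) * (f t + x * g t))
          = fun t => f t * f t + (2*x) * (f t * g t) + x^2 * (g t * g t) := by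
        funext t; ring
      rw [e]
      exact (hff.add (hfg.const_mul _)).add (hgg.const_mul _)
    have := cheb_self_nonneg (fun t => f t + x * g t) α β hab h1 h2
    have exp2 : cheb (fun t => f t + x * g t) (fun t => f t + x * g t) α β
        = cheb f f α β + (2*x) * cheb f g α β + x^2 * cheb g g α β := by
      unfold cheb
      have e1 : (∫ t in α..β, (f t + x * g t) * (f t + x * g t))
          = (∫ t in α..β, f t * f t) + (2*x) * (∫ t in α..β, f t * g t)
            + x^2 * (∫ t in α..β, g t * g t) := by
        have e : (fun t => (f t + x * g t) * (f t + x * g t))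
            = fun t => f t * f t + (2*x) * (f t * g t) + x^2 * (g t * g t) := by
          funext t; ring
        rw [e, intervalIntegral.integral_add (hff.add (hfg.const_mul _)) (hgg.const_mul _),
          intervalIntegral.integral_add hff (hfg.const_mul _),
          intervalIntegral.integral_const_mul, intervalIntegral.integral_const_mul]
      have e2 : (∫ t in α..β, (f t + x * g t))
          = (∫ t in α..β, f t) + x * (∫ t in α..β, g t) := by
        rw [intervalIntegral.integral_add hf (hg.const_mul _),
          intervalIntegral.integral_const_mul]
      rw [e1, e2]; ring
    rw [exp2] at this
    nlinarith [this]
  have hd := discrim_le_zero key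
  rw [discrim] at hd
  nlinarith [hd]

lemma abs_cheb_le (f g : ℝ → ℝ) (α β : ℝ) (hab : α < β)
    (hf : IntervalIntegrable f volume α β) (hg : IntervalIntegrable g volume α β)
    (hfg : IntervalIntegrable (fun t => f t * g t) volume α β)
    (hff : IntervalIntegrable (fun t => f t * f t) volume α β)
    (hgg : IntervalIntegrable (fun t => g t * g t) volume α β) :
    |cheb f g α β| ≤ Real.sqrt (cheb f f α β) * Real.sqrt (cheb g g α β) := by
  have h1 := cheb_sq_le f g α β hab hf hg hfg hff hgg
  have h2 := cheb_self_nonneg f α β hab hf hff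
  have h3 := cheb_self_nonneg g α β hab hg hgg
  calc |cheb f g α β| = Real.sqrt ((cheb f g α β)^2) := (Real.sqrt_sq_eq_abs _).symm
    _ ≤ Real.sqrt (cheb f f α β * cheb g g α β) := Real.sqrt_le_sqrt h1
    _ = Real.sqrt (cheb f f α β) * Real.sqrt (cheb g g α β) := Real.sqrt_mul h2 _

theorem stmt0 (f g : ℝ → ℝ) (a b u v : ℝ) (hau : a ≤ u) (huv : u < v) (hvb : v ≤ b)
    (hf : IntervalIntegrable f volume a b) (hg : IntervalIntegrable g volume a b)
    (hfg : IntervalIntegrable (fun t => f t * g t) volume a b)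
    (hff : IntervalIntegrable (fun t => f t * f t) volume a b)
    (hgg : IntervalIntegrable (fun t => g t * g t) volume a b) :
    |cheb f g a v - cheb f g u b| ≤
      Real.sqrt (cheb f f a v) * Real.sqrt (cheb g g a v) +
        Real.sqrt (cheb f f u b) * Real.sqrt (cheb g g u b) := by
  have hab : a ≤ b := by linarith
  have hav : a < v := lt_of_le_of_lt hau huv
  have hub : u < b := lt_of_lt_of_le huv hvb
  have sub1 : Set.uIcc a v ⊆ Set.uIcc a b :=
    Set.uIcc_subset_uIcc (Set.left_mem_uIcc) (by rw [Set.uIcc_of_le hab]; exact ⟨le_of_lt hav, hvb⟩)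
  have sub2 : Set.uIcc u b ⊆ Set.uIcc a b :=
    Set.uIcc_subset_uIcc (by rw [Set.uIcc_of_le hab]; exact ⟨hau, le_of_lt hub⟩) (Set.right_mem_uIcc)
  have A := abs_cheb_le f g a v hav (hf.mono_set sub1) (hg.mono_set sub1)
    (hfg.mono_set sub1) (hff.mono_set sub1) (hgg.mono_set sub1)
  have B := abs_cheb_le f g u b hub (hf.mono_set sub2) (hg.mono_set sub2)
    (hfg.mono_set sub2) (hff.mono_set sub2) (hgg.mono_set sub2)
  calc |cheb f g a v - cheb f g u b| ≤ |cheb f g a v| + |cheb f g u b| := abs_sub _ _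
    _ ≤ _ := add_le_add A B
end

section
/- Let f : [a,b] → ℝ be of bounded variation and g : [a,b] → ℝ be Lebesgue integrable. Then T_a^b(f,g) = (1/(b-a)²) ∫_a^b [ (t-a) ∫_a^b g(s) ds − (b-a) ∫_a^t g(s) ds ] df(t), where the outer integral is a Riemann–Stieltjes integral with integrator f. -/
open MeasureTheory Set intervalIntegral

lemma part_mono {t : ℕ → ℝ} {n : ℕ} (h : ∀ i < n, t i ≤ t (i + 1)) :
    ∀ {i j : ℕ}, i ≤ j → j ≤ n → t i ≤ t j := by
  intro i j hij hjn
  induction j with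
  | zero => rw [Nat.le_zero.mp hij]
  | succ k ih =>
    rcases Nat.lt_or_ge i (k + 1) with hk | hk
    · exact le_trans (ih (Nat.lt_succ_iff.mp hk) (le_trans (Nat.le_succ k) hjn))
        (h k (Nat.lt_of_lt_of_le (Nat.lt_succ_self k) hjn))
    · rw [le_antisymm hij hk]

lemma evar_sum (f : ℝ → ℝ) : ∀ (n : ℕ) (t : ℕ → ℝ), (∀ i < n, t i ≤ t (i + 1)) →
    ∑ i ∈ Finset.range n, eVariationOn f (Icc (t i) (t (i + 1)))
      ≤ eVariationOn f (Icc (t 0) (t n)) := by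
  intro n
  induction n with
  | zero => simp
  | succ m ih =>
    intro t h
    have h' : ∀ i < m, t i ≤ t (i + 1) := fun i hi => h i (Nat.lt_succ_of_lt hi)
    have h0m : t 0 ≤ t m := part_mono h' (Nat.zero_le m) le_rfl
    rw [Finset.sum_range_succ]
    calc ∑ i ∈ Finset.range m, eVariationOn f (Icc (t i) (t (i + 1)))
          + eVariationOn f (Icc (t m) (t (m + 1)))
        ≤ eVariationOn f (Icc (t 0) (t m)) + eVariationOn f (Icc (t m) (t (m + 1))) :=
          add_le_add_left (ih t h') _
      _ = eVariationOn f (Icc (t 0) (t (m + 1))) := by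
          have := eVariationOn.Icc_add_Icc f (s := univ) h0m (h m (Nat.lt_succ_self m))
            (mem_univ (t m))
          simpa [univ_inter] using this

/-- `IsRSIntegral φ f a b I` : the Riemann–Stieltjes integral `∫_a^b φ(t) df(t)`
exists and equals `I`. -/
def IsRSIntegral (φ f : ℝ → ℝ) (a b I : ℝ) : Prop :=
  ∀ ε > (0 : ℝ), ∃ δ > (0 : ℝ), ∀ (n : ℕ) (t ξ : ℕ → ℝ),
    t 0 = a → t n = b → (∀ i < n, t i ≤ t (i + 1)) →
    (∀ i < n, t (i + 1) - t i < δ) →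
    (∀ i < n, ξ i ∈ Icc (t i) (t (i + 1))) →
    |(∑ i ∈ Finset.range n, φ (ξ i) * (f (t (i + 1)) - f (t i))) - I| < ε

theorem stmt2 (f g : ℝ → ℝ) (a b : ℝ) (hab : a < b)
    (hf : BoundedVariationOn f (Icc a b))
    (hg : IntervalIntegrable g volume a b) :
    IsRSIntegral
      (fun t => (t - a) * (∫ s in a..b, g s) - (b - a) * ∫ s in a..t, g s)
      f a b ((b - a) ^ 2 * cheb f g a b) := by
  have hab' : a ≤ b := hab.le
  have hba : b - a ≠ 0 := sub_ne_zero.2 hab.ne'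
  -- the clamp to [a,b]
  set cl : ℝ → ℝ := fun x => max a (min x b) with hcl
  have hclmem : ∀ x, cl x ∈ Icc a b :=
    fun x => ⟨le_max_left _ _, max_le hab' (min_le_right _ _)⟩
  have hcl_eq : ∀ x ∈ Icc a b, cl x = x := by
    intro x hx
    simp only [hcl]
    rw [min_eq_left hx.2, max_eq_right hx.1]
  have hclmono : Monotone cl := fun x y hxy =>
    max_le_max le_rfl (min_le_min hxy le_rfl)
  set fb : ℝ → ℝ := fun x => f (cl x) with hfbdef
  have hfbeq : ∀ x ∈ Icc a b, fb x = f x := fun x hx => by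
    simp only [hfbdef, hcl_eq x hx]
  obtain ⟨p, q, hp, hq, hpq⟩ :=
    hf.locallyBoundedVariationOn.exists_monotoneOn_sub_monotoneOn
  have hfbmeas : Measurable fb := by
    have hP : Monotone fun x => p (cl x) :=
      fun x y h => hp (hclmem x) (hclmem y) (hclmono h)
    have hQ : Monotone fun x => q (cl x) :=
      fun x y h => hq (hclmem x) (hclmem y) (hclmono h)
    have : fb = fun x => p (cl x) - q (cl x) := by
      funext x; simp only [hfbdef, hpq]; rfl
    rw [this]; exact hP.measurable.sub hQ.measurable
  set C : ℝ := |f a| + (eVariationOn f (Icc a b)).toReal with hCdef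
  have hfbbd : ∀ x, ‖fb x‖ ≤ C := by
    intro x
    have h1 : dist (f (cl x)) (f a) ≤ (eVariationOn f (Icc a b)).toReal :=
      hf.dist_le (hclmem x) (left_mem_Icc.2 hab')
    rw [Real.dist_eq] at h1
    have : |f (cl x)| ≤ |f a| + |f (cl x) - f a| := by
      calc |f (cl x)| = |f a + (f (cl x) - f a)| := by ring_nf
        _ ≤ |f a| + |f (cl x) - f a| := abs_add_le _ _
    simpa only [hfbdef, Real.norm_eq_abs] using this.trans (by linarith)
  -- ψ and φ
  set G : ℝ := ∫ s in a..b, g s with hGdef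
  set ψ : ℝ → ℝ := fun s => G - (b - a) * g s with hψdef
  set φ : ℝ → ℝ := fun t => (t - a) * G - (b - a) * ∫ s in a..t, g s with hφdef
  have hguv : ∀ u v, u ∈ Icc a b → v ∈ Icc a b → IntervalIntegrable g volume u v := by
    intro u v hu hv
    refine hg.mono_set ?_
    rw [← uIcc_of_le hab'] at hu hv
    exact uIcc_subset_uIcc hu hv
  have hψuv : ∀ u v, u ∈ Icc a b → v ∈ Icc a b → IntervalIntegrable ψ volume u v := by
    intro u v hu hv
    exact (intervalIntegrable_const (c := G)).sub ((hguv u v hu hv).const_mul (b - a))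
  have hψ : IntervalIntegrable ψ volume a b :=
    hψuv a b (left_mem_Icc.2 hab') (right_mem_Icc.2 hab')
  have hφdiff : ∀ u v, u ∈ Icc a b → v ∈ Icc a b →
      (∫ s in u..v, ψ s) = φ v - φ u := by
    intro u v hu hv
    have h1 : (∫ s in u..v, ψ s) = (v - u) * G - (b - a) * ∫ s in u..v, g s := by
      simp only [hψdef]
      rw [intervalIntegral.integral_sub intervalIntegrable_const
        ((hguv u v hu hv).const_mul (b - a)),
        intervalIntegral.integral_const, intervalIntegral.integral_const_mul]
      simp [smul_eq_mul, mul_comm]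
    have h2 : (∫ s in u..v, g s) = (∫ s in a..v, g s) - ∫ s in a..u, g s :=
      (integral_interval_sub_left (hguv a v (left_mem_Icc.2 hab') hv)
        (hguv a u (left_mem_Icc.2 hab') hu)).symm
    rw [h1, h2]; simp only [hφdef]; ring
  -- integrability of products
  have hfbψ : ∀ u v, u ∈ Icc a b → v ∈ Icc a b →
      IntervalIntegrable (fun s => fb s * ψ s) volume u v := by
    intro u v hu hv
    rw [intervalIntegrable_iff]
    exact Integrable.bdd_mul ((hψuv u v hu hv).def') (hfbmeas.aestronglyMeasurable.restrict)
      (ae_of_all _ hfbbd)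
  have hfbg : IntervalIntegrable (fun s => fb s * g s) volume a b := by
    rw [intervalIntegrable_iff]
    exact Integrable.bdd_mul (hg.def') (hfbmeas.aestronglyMeasurable.restrict) (ae_of_all _ hfbbd)
  have hfbInt : IntervalIntegrable fb volume a b := by
    have hP : Monotone fun x => p (cl x) :=
      fun x y h => hp (hclmem x) (hclmem y) (hclmono h)
    have hQ : Monotone fun x => q (cl x) :=
      fun x y h => hq (hclmem x) (hclmem y) (hclmono h)
    have hfb' : fb = fun x => p (cl x) - q (cl x) := by
      funext x; simp only [hfbdef, hpq]; rfl
    rw [hfb']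
    exact (hP.monotoneOn _).intervalIntegrable.sub ((hQ.monotoneOn _).intervalIntegrable)
  -- the value of the integral
  have hIcheb : (b - a) ^ 2 * cheb f g a b = -(∫ s in a..b, fb s * ψ s) := by
    have e1 : (∫ t in a..b, f t * g t) = ∫ t in a..b, fb t * g t :=
      (intervalIntegral.integral_congr (fun x hx =>
        by rw [hfbeq x ((uIcc_of_le hab') ▸ hx)])).symm
    have e2 : (∫ t in a..b, f t) = ∫ t in a..b, fb t :=
      (intervalIntegral.integral_congr (fun x hx =>
        hfbeq x ((uIcc_of_le hab') ▸ hx))).symm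
    have e3 : (∫ s in a..b, fb s * ψ s)
        = G * (∫ s in a..b, fb s) - (b - a) * ∫ s in a..b, fb s * g s := by
      have hpt : ∀ s, fb s * ψ s = G * fb s - (b - a) * (fb s * g s) := by
        intro s; simp only [hψdef]; ring
      simp_rw [hpt]
      rw [intervalIntegral.integral_sub (hfbInt.const_mul G) (hfbg.const_mul (b - a)),
        intervalIntegral.integral_const_mul, intervalIntegral.integral_const_mul]
    rw [cheb, e1, e2, e3, ← hGdef]
    field_simp
    ring
  -- the main estimate
  set V : ℝ := (eVariationOn f (Icc a b)).toReal with hVdef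
  have hV0 : 0 ≤ V := ENNReal.toReal_nonneg
  intro ε hε
  set ε' : ℝ := ε / (2 * (V + 1)) with hε'def
  have hε'0 : 0 < ε' := div_pos hε (by positivity)
  set Ψ : ℝ → ℝ := fun x => ∫ s in a..x, |ψ s| with hΨdef
  have habsuv : ∀ u v, u ∈ Icc a b → v ∈ Icc a b →
      IntervalIntegrable (fun s => |ψ s|) volume u v := fun u v hu hv => (hψuv u v hu hv).abs
  have hΨcont : ContinuousOn Ψ (Icc a b) := by
    have h1 : IntegrableOn (fun s => |ψ s|) (uIcc a b) volume := by
      rw [uIcc_of_le hab', ← intervalIntegrable_iff_integrableOn_Icc_of_le hab']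
      exact hψ.abs
    simpa [hΨdef, uIcc_of_le hab'] using
      intervalIntegral.continuousOn_primitive_interval h1
  have hUC := isCompact_Icc.uniformContinuousOn_of_continuous hΨcont
  rw [Metric.uniformContinuousOn_iff] at hUC
  obtain ⟨δ, hδ0, hδ⟩ := hUC ε' hε'0
  have hsmall : ∀ u v, u ∈ Icc a b → v ∈ Icc a b → u ≤ v → v - u < δ →
      (∫ s in u..v, |ψ s|) ≤ ε' := by
    intro u v hu hv huv hd
    have h1 : (∫ s in u..v, |ψ s|) = Ψ v - Ψ u :=
      (integral_interval_sub_left (habsuv a v (left_mem_Icc.2 hab') hv)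
        (habsuv a u (left_mem_Icc.2 hab') hu)).symm
    have h2 : dist (Ψ v) (Ψ u) < ε' := by
      refine hδ v hv u hu ?_
      rw [Real.dist_eq, abs_of_nonneg (by linarith)]
      linarith
    rw [Real.dist_eq] at h2
    calc (∫ s in u..v, |ψ s|) = Ψ v - Ψ u := h1
      _ ≤ |Ψ v - Ψ u| := le_abs_self _
      _ ≤ ε' := h2.le
  refine ⟨δ, hδ0, ?_⟩
  intro n t ξ ht0 htn htmono htmesh hξ
  have htmem : ∀ i, i ≤ n → t i ∈ Icc a b := fun i hi =>
    ⟨ht0 ▸ part_mono htmono (Nat.zero_le i) hi, htn ▸ part_mono htmono hi le_rfl⟩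
  have hξmem : ∀ i, i < n → ξ i ∈ Icc a b := fun i hi =>
    ⟨(htmem i hi.le).1.trans (hξ i hi).1, (hξ i hi).2.trans (htmem (i + 1) hi).2⟩
  -- decompose the value of the integral over the partition
  have hIsum : (∫ s in a..b, fb s * ψ s)
      = ∑ i ∈ Finset.range n, ∫ s in t i..t (i + 1), fb s * ψ s := by
    rw [intervalIntegral.sum_integral_adjacent_intervals
      (fun k hk => hfbψ _ _ (htmem k hk.le) (htmem (k + 1) hk)), ht0, htn]
  have htel : ∑ i ∈ Finset.range n,
      (fb (t (i + 1)) * φ (t (i + 1)) - fb (t i) * φ (t i)) = 0 := by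
    rw [Finset.sum_range_sub fun i => fb (t i) * φ (t i)]
    have hφa : φ a = 0 := by simp [hφdef]
    have hφb : φ b = 0 := by simp only [hφdef]; rw [← hGdef]; ring
    rw [htn, ht0, hφa, hφb]
    ring
  have hterm : ∀ i ∈ Finset.range n,
      ((∫ s in ξ i..t (i + 1), (fb s - fb (t (i + 1))) * ψ s)
        + ∫ s in t i..ξ i, (fb s - fb (t i)) * ψ s)
      = φ (ξ i) * (f (t (i + 1)) - f (t i))
        + (∫ s in t i..t (i + 1), fb s * ψ s)
        - (fb (t (i + 1)) * φ (t (i + 1)) - fb (t i) * φ (t i)) := by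
    intro i hi
    rw [Finset.mem_range] at hi
    have h0 := htmem i hi.le
    have h1 := htmem (i + 1) hi
    have hx := hξmem i hi
    have e1 : (∫ s in ξ i..t (i + 1), (fb s - fb (t (i + 1))) * ψ s)
        = (∫ s in ξ i..t (i + 1), fb s * ψ s)
          - fb (t (i + 1)) * (φ (t (i + 1)) - φ (ξ i)) := by
      have hpt : ∀ s : ℝ, (fb s - fb (t (i + 1))) * ψ s
          = fb s * ψ s - fb (t (i + 1)) * ψ s := fun s => by ring
      simp_rw [hpt]
      rw [intervalIntegral.integral_sub (hfbψ _ _ hx h1) ((hψuv _ _ hx h1).const_mul _),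
        intervalIntegral.integral_const_mul, hφdiff _ _ hx h1]
    have e2 : (∫ s in t i..ξ i, (fb s - fb (t i)) * ψ s)
        = (∫ s in t i..ξ i, fb s * ψ s) - fb (t i) * (φ (ξ i) - φ (t i)) := by
      have hpt : ∀ s : ℝ, (fb s - fb (t i)) * ψ s
          = fb s * ψ s - fb (t i) * ψ s := fun s => by ring
      simp_rw [hpt]
      rw [intervalIntegral.integral_sub (hfbψ _ _ h0 hx) ((hψuv _ _ h0 hx).const_mul _),
        intervalIntegral.integral_const_mul, hφdiff _ _ h0 hx]
    have e3 : (∫ s in t i..t (i + 1), fb s * ψ s)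
        = (∫ s in t i..ξ i, fb s * ψ s) + ∫ s in ξ i..t (i + 1), fb s * ψ s :=
      (intervalIntegral.integral_add_adjacent_intervals (hfbψ _ _ h0 hx)
        (hfbψ _ _ hx h1)).symm
    rw [e1, e2, e3, ← hfbeq _ h0, ← hfbeq _ h1]
    ring
  have hSI : (∑ i ∈ Finset.range n, φ (ξ i) * (f (t (i + 1)) - f (t i)))
      - (b - a) ^ 2 * cheb f g a b
      = ∑ i ∈ Finset.range n,
        ((∫ s in ξ i..t (i + 1), (fb s - fb (t (i + 1))) * ψ s)
          + ∫ s in t i..ξ i, (fb s - fb (t i)) * ψ s) := by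
    rw [Finset.sum_congr rfl hterm, Finset.sum_sub_distrib, Finset.sum_add_distrib,
      ← hIsum, htel, hIcheb]
    ring
  -- the termwise bound
  have hbound : ∀ i ∈ Finset.range n,
      |(∫ s in ξ i..t (i + 1), (fb s - fb (t (i + 1))) * ψ s)
        + ∫ s in t i..ξ i, (fb s - fb (t i)) * ψ s|
      ≤ (eVariationOn f (Icc (t i) (t (i + 1)))).toReal * (2 * ε') := by
    intro i hi
    rw [Finset.mem_range] at hi
    have h0 := htmem i hi.le
    have h1 := htmem (i + 1) hi
    have hx := hξmem i hi
    have hsub : Icc (t i) (t (i + 1)) ⊆ Icc a b := Icc_subset_Icc h0.1 h1.2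
    have hBV : BoundedVariationOn f (Icc (t i) (t (i + 1))) := hf.mono hsub
    set Vi : ℝ := (eVariationOn f (Icc (t i) (t (i + 1)))).toReal with hVidef
    have hVi0 : 0 ≤ Vi := ENNReal.toReal_nonneg
    have key : ∀ u v w, u ∈ Icc (t i) (t (i + 1)) → v ∈ Icc (t i) (t (i + 1)) →
        w ∈ Icc (t i) (t (i + 1)) → u ≤ v →
        |∫ s in u..v, (fb s - fb w) * ψ s| ≤ Vi * ε' := by
      intro u v w hu hv hw huv
      have hu' := hsub hu
      have hv' := hsub hv
      have hptbd : ∀ s ∈ uIoc u v, ‖(fb s - fb w) * ψ s‖ ≤ Vi * |ψ s| := by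
        intro s hs
        have hs' : s ∈ Icc (t i) (t (i + 1)) := by
          rw [uIoc_of_le huv] at hs
          exact ⟨hu.1.trans hs.1.le, hs.2.trans hv.2⟩
        have hdist : |f s - f w| ≤ Vi := by
          have := hBV.dist_le hs' hw
          rwa [Real.dist_eq] at this
        rw [Real.norm_eq_abs, abs_mul, hfbeq _ (hsub hs'), hfbeq _ (hsub hw)]
        exact mul_le_mul_of_nonneg_right hdist (abs_nonneg _)
      have hb1 : IntervalIntegrable (fun s => Vi * |ψ s|) volume u v :=
        ((hψuv _ _ hu' hv').abs).const_mul _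
      have h2 : ‖∫ s in u..v, (fb s - fb w) * ψ s‖
          ≤ |(∫ s in u..v, Vi * |ψ s|)| := by
        refine (intervalIntegral.norm_integral_le_of_norm_le huv ?_ hb1).trans (le_abs_self _)
        exact ae_of_all _ (fun s hs => hptbd s (by rw [uIoc_of_le huv]; exact hs))
      rw [Real.norm_eq_abs] at h2
      have h3 : (∫ s in u..v, Vi * |ψ s|) = Vi * ∫ s in u..v, |ψ s| :=
        intervalIntegral.integral_const_mul _ _
      have h4 : (∫ s in u..v, |ψ s|) ≤ ε' := by
        refine hsmall u v hu' hv' huv ?_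
        have := htmesh i hi
        have h5 : u ≥ t i := hu.1
        have h6 : v ≤ t (i + 1) := hv.2
        linarith
      have h7 : 0 ≤ ∫ s in u..v, |ψ s| :=
        intervalIntegral.integral_nonneg huv fun s _ => abs_nonneg _
      calc |∫ s in u..v, (fb s - fb w) * ψ s| ≤ |(∫ s in u..v, Vi * |ψ s|)| := h2
        _ = Vi * ∫ s in u..v, |ψ s| := by rw [h3, abs_of_nonneg (by positivity)]
        _ ≤ Vi * ε' := mul_le_mul_of_nonneg_left h4 hVi0
    have k1 := key (ξ i) (t (i + 1)) (t (i + 1)) (hξ i hi)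
      (right_mem_Icc.2 ((hξ i hi).1.trans (hξ i hi).2)) (right_mem_Icc.2 ((hξ i hi).1.trans (hξ i hi).2)) (hξ i hi).2
    have k2 := key (t i) (ξ i) (t i) (left_mem_Icc.2 ((hξ i hi).1.trans (hξ i hi).2))
      (hξ i hi) (left_mem_Icc.2 ((hξ i hi).1.trans (hξ i hi).2)) (hξ i hi).1
    calc |(∫ s in ξ i..t (i + 1), (fb s - fb (t (i + 1))) * ψ s)
          + ∫ s in t i..ξ i, (fb s - fb (t i)) * ψ s|
        ≤ |∫ s in ξ i..t (i + 1), (fb s - fb (t (i + 1))) * ψ s|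
          + |∫ s in t i..ξ i, (fb s - fb (t i)) * ψ s| := abs_add_le _ _
      _ ≤ Vi * ε' + Vi * ε' := add_le_add k1 k2
      _ = Vi * (2 * ε') := by ring
  -- the variation sum bound
  have hVsum : ∑ i ∈ Finset.range n,
      (eVariationOn f (Icc (t i) (t (i + 1)))).toReal ≤ V := by
    have h1 := evar_sum f n t htmono
    rw [ht0, htn] at h1
    have hne : ∀ i ∈ Finset.range n, eVariationOn f (Icc (t i) (t (i + 1))) ≠ ⊤ := by
      intro i hi
      rw [Finset.mem_range] at hi
      exact hf.mono (Icc_subset_Icc (htmem i hi.le).1 (htmem (i + 1) hi).2)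
    rw [← ENNReal.toReal_sum hne]
    exact ENNReal.toReal_mono hf h1
  -- conclusion
  rw [hSI]
  calc |∑ i ∈ Finset.range n,
        ((∫ s in ξ i..t (i + 1), (fb s - fb (t (i + 1))) * ψ s)
          + ∫ s in t i..ξ i, (fb s - fb (t i)) * ψ s)|
      ≤ ∑ i ∈ Finset.range n,
        |(∫ s in ξ i..t (i + 1), (fb s - fb (t (i + 1))) * ψ s)
          + ∫ s in t i..ξ i, (fb s - fb (t i)) * ψ s| :=
        Finset.abs_sum_le_sum_abs _ _
    _ ≤ ∑ i ∈ Finset.range n,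
        (eVariationOn f (Icc (t i) (t (i + 1)))).toReal * (2 * ε') :=
        Finset.sum_le_sum hbound
    _ = (∑ i ∈ Finset.range n,
        (eVariationOn f (Icc (t i) (t (i + 1)))).toReal) * (2 * ε') := by
        rw [Finset.sum_mul]
    _ ≤ V * (2 * ε') := mul_le_mul_of_nonneg_right hVsum (by positivity)
    _ < ε := by
        have hfrac : V * (2 * ε') = ε * (V / (V + 1)) := by
          rw [hε'def]; field_simp
        rw [hfrac]
        calc ε * (V / (V + 1)) < ε * 1 := by
              refine mul_lt_mul_of_pos_left ?_ hε
              rw [div_lt_one (by linarith)]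
              linarith
          _ = ε := mul_one ε
end

section
/- Let f : [a,b] → ℝ be of bounded variation and g : [a,b] → ℝ be absolutely continuous with g' ∈ L¹[a,b]. Then for all a ≤ u < v ≤ b, |T_a^v(f,g) − T_u^b(f,g)| ≤ (1/2)·‖g'‖_{1,[a,b]}·V_a^b f. -/
open MeasureTheory Set intervalIntegral

lemma cheb_bound (f g g' : ℝ → ℝ) (a b α β : ℝ) (haα : a ≤ α) (hαβ : α < β) (hβb : β ≤ b)
    (hf : BoundedVariationOn f (Icc a b))
    (hg : ∀ x ∈ Icc a b, g x = g a + ∫ t in a..x, g' t)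
    (hg'i : IntervalIntegrable g' volume a b) :
    |cheb f g α β| ≤ (1/4) * (∫ t in a..b, |g' t|) * totalVar f a b := by
  have hab : a ≤ b := haα.trans (hαβ.le.trans hβb)
  have hsub : Icc α β ⊆ Icc a b := Icc_subset_Icc haα hβb
  have huIcc : uIcc α β = Icc α β := uIcc_of_le hαβ.le
  have huIccab : uIcc a b = Icc a b := uIcc_of_le hab
  have hsub' : uIcc α β ⊆ Icc a b := by rw [huIcc]; exact hsub
  set V : ℝ := totalVar f a b with hVdef
  have hV0 : 0 ≤ V := ENNReal.toReal_nonneg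
  set L : ℝ := ∫ t in a..b, |g' t| with hLdef
  have hL0 : 0 ≤ L := integral_nonneg hab fun _ _ => abs_nonneg _
  -- the indicator of |g'|
  set φ : ℝ → ℝ := (Icc a b).indicator (fun t => |g' t|) with hφdef
  have hφint : Integrable φ volume := by
    refine IntegrableOn.integrable_indicator ?_ measurableSet_Icc
    exact (intervalIntegrable_iff_integrableOn_Icc_of_le hab).1 hg'i.abs
  have hφnn : ∀ t, 0 ≤ φ t := fun t => indicator_nonneg (fun s _ => abs_nonneg _) t
  have hφeq : ∀ t ∈ Icc a b, φ t = |g' t| := fun t ht => indicator_of_mem ht _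
  set G : ℝ → ℝ := fun t => ∫ s in α..t, φ s with hGdef
  have hGcont : Continuous G := hφint.continuous_primitive α
  have hGdiff : ∀ x y : ℝ, G y - G x = ∫ s in x..y, φ s := by
    intro x y
    have h := integral_add_adjacent_intervals (a := α) (b := x) (c := y)
      hφint.intervalIntegrable hφint.intervalIntegrable
    simp only [hGdef]; linarith
  have hGmono : ∀ x y : ℝ, x ≤ y → G x ≤ G y := by
    intro x y hxy
    have h0 : 0 ≤ ∫ s in x..y, φ s := integral_nonneg hxy fun u _ => hφnn u
    have := hGdiff x y; linarith
  have hG0 : ∀ t ∈ Icc α β, 0 ≤ G t := fun t ht =>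
    integral_nonneg ht.1 fun u _ => hφnn u
  have hGle : ∀ t ∈ Icc α β, G t ≤ L := by
    intro t ht
    have h1 : (∫ s in α..t, φ s) ≤ ∫ s in a..b, φ s :=
      integral_mono_interval haα ht.1 (ht.2.trans hβb)
        (Filter.Eventually.of_forall hφnn) hφint.intervalIntegrable
    have h2 : (∫ s in a..b, φ s) = L := by
      rw [hLdef]
      refine integral_congr fun t ht => ?_
      rw [huIccab] at ht; exact hφeq t ht
    simpa [hGdef, h2] using h1
  -- |g x - g y| ≤ |G x - G y|
  have hgG : ∀ x ∈ Icc a b, ∀ y ∈ Icc a b, |g x - g y| ≤ |G x - G y| := by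
    have key : ∀ x ∈ Icc a b, ∀ y ∈ Icc a b, y ≤ x → |g x - g y| ≤ |G x - G y| := by
      intro x hx y hy hyx
      have hgd : g x - g y = ∫ t in y..x, g' t := by
        rw [hg x hx, hg y hy]
        have h := integral_add_adjacent_intervals (a := a) (b := y) (c := x)
          (hg'i.mono_set (by rw [huIccab, uIcc_of_le hy.1]; exact Icc_subset_Icc le_rfl hy.2))
          (hg'i.mono_set (by rw [huIccab, uIcc_of_le hyx]; exact Icc_subset_Icc hy.1 hx.2))
        linarith
      have h1 : |∫ t in y..x, g' t| ≤ ∫ t in y..x, |g' t| :=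
        abs_integral_le_integral_abs hyx
      have h2 : (∫ t in y..x, |g' t|) = ∫ t in y..x, φ t := by
        refine (integral_congr fun t ht => ?_).symm
        rw [uIcc_of_le hyx] at ht
        exact hφeq t ⟨hy.1.trans ht.1, ht.2.trans hx.2⟩
      have h3 : (∫ t in y..x, φ t) = G x - G y := (hGdiff y x).symm
      rw [hgd]
      calc |∫ t in y..x, g' t| ≤ ∫ t in y..x, |g' t| := h1
        _ = G x - G y := by rw [h2, h3]
        _ ≤ |G x - G y| := le_abs_self _
    intro x hx y hy
    rcases le_total y x with h | h
    · exact key x hx y hy h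
    · rw [abs_sub_comm, abs_sub_comm (G x)]; exact key y hy x hx h
  have hfV : ∀ x ∈ Icc a b, ∀ y ∈ Icc a b, |f x - f y| ≤ V := by
    intro x hx y hy
    have := hf.dist_le hx hy
    rwa [Real.dist_eq] at this
  -- integrability of f, g, f*g on [α,β]
  obtain ⟨p, q, hp, hq, hpq⟩ := hf.locallyBoundedVariationOn.exists_monotoneOn_sub_monotoneOn
  have hfint : IntervalIntegrable f volume α β := by
    rw [hpq]
    exact ((hp.mono hsub').intervalIntegrable).sub ((hq.mono hsub').intervalIntegrable)
  have hgcont : ContinuousOn g (Icc a b) := by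
    have hprim : ContinuousOn (fun x => g a + ∫ t in a..x, g' t) (Icc a b) := by
      refine continuousOn_const.add ?_
      have : IntegrableOn g' (uIcc a b) volume := by
        rw [huIccab]; exact (intervalIntegrable_iff_integrableOn_Icc_of_le hab).1 hg'i
      have := continuousOn_primitive_interval (a := a) (b := b) (f := g') (μ := volume) this
      rwa [huIccab] at this
    exact ContinuousOn.congr hprim hg
  have hgcont' : ContinuousOn g (uIcc α β) := hgcont.mono hsub'
  have hgint : IntervalIntegrable g volume α β := hgcont'.intervalIntegrable
  have hfg : IntervalIntegrable (fun x => f x * g x) volume α β :=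
    hfint.mul_continuousOn hgcont'
  set l : ℝ := β - α with hldef
  have hl : 0 < l := sub_pos.2 hαβ
  set A : ℝ := ∫ t in α..β, f t with hAdef
  set B : ℝ := ∫ t in α..β, g t with hBdef
  set C : ℝ := ∫ t in α..β, f t * g t with hCdef
  -- expansion of the inner double integral
  have hinner : ∀ x : ℝ, (∫ y in α..β, (f x - f y) * (g x - g y)) =
      l * (f x * g x) - f x * B - g x * A + C := by
    intro x
    have heq : EqOn (fun y => (f x - f y) * (g x - g y))
        (fun y => f x * g x - f x * g y - g x * f y + f y * g y) (uIcc α β) :=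
      fun y _ => by ring
    rw [integral_congr heq]
    have i1 : IntervalIntegrable (fun _ : ℝ => f x * g x) volume α β := intervalIntegrable_const
    have i2 : IntervalIntegrable (fun y => f x * g y) volume α β := hgint.const_mul _
    have i3 : IntervalIntegrable (fun y => g x * f y) volume α β := hfint.const_mul _
    rw [integral_add ((i1.sub i2).sub i3) hfg, integral_sub (i1.sub i2) i3,
      integral_sub i1 i2, intervalIntegral.integral_const, intervalIntegral.integral_const_mul, intervalIntegral.integral_const_mul]
    simp only [smul_eq_mul, ← hAdef, ← hBdef, ← hCdef, ← hldef]
    try ring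
  have hI : (∫ x in α..β, (l * (f x * g x) - f x * B - g x * A + C)) =
      2 * (l * C - A * B) := by
    have i1 : IntervalIntegrable (fun x => l * (f x * g x)) volume α β := hfg.const_mul _
    have i2 : IntervalIntegrable (fun x => f x * B) volume α β := hfint.mul_const _
    have i3 : IntervalIntegrable (fun x => g x * A) volume α β := hgint.mul_const _
    rw [integral_add ((i1.sub i2).sub i3) intervalIntegrable_const,
      integral_sub (i1.sub i2) i3, integral_sub i1 i2, intervalIntegral.integral_const,
      intervalIntegral.integral_const_mul, intervalIntegral.integral_mul_const, intervalIntegral.integral_mul_const]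
    simp only [smul_eq_mul, ← hAdef, ← hBdef, ← hCdef, ← hldef]
    try ring
  set H : ℝ → ℝ := fun x => ∫ y in α..x, G y with hHdef
  have hHcont : Continuous H :=
    intervalIntegral.continuous_primitive (fun c d => hGcont.intervalIntegrable c d) α
  set CG : ℝ := ∫ y in α..β, G y with hCGdef
  have hHx : ∀ x, H x = ∫ y in α..x, G y := fun x => rfl
  have hHβ : H β = CG := rfl
  have hHdiff : ∀ x : ℝ, CG - H x = ∫ y in x..β, G y := by
    intro x
    have h := integral_add_adjacent_intervals (a := α) (b := x) (c := β) (μ := volume)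
      (hGcont.intervalIntegrable α x) (hGcont.intervalIntegrable x β)
    rw [hHx x, hCGdef]; linarith
  -- pointwise bound
  have hptwise : ∀ x ∈ Icc α β, |l * (f x * g x) - f x * B - g x * A + C| ≤
      V * ((2*x - α - β) * G x - 2 * H x + CG) := by
    intro x hx
    have hx' : x ∈ Icc a b := hsub hx
    have s1 : |l * (f x * g x) - f x * B - g x * A + C| ≤
        ∫ y in α..β, |(f x - f y) * (g x - g y)| := by
      rw [← hinner x]; exact abs_integral_le_integral_abs hαβ.le
    have iabs : IntervalIntegrable (fun y => |(f x - f y) * (g x - g y)|) volume α β :=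
      ((intervalIntegrable_const.sub hfint).mul_continuousOn
        (continuousOn_const.sub hgcont')).abs
    have icont : Continuous (fun y => V * |G x - G y|) :=
      continuous_const.mul ((continuous_const.sub hGcont).abs)
    have s2 : (∫ y in α..β, |(f x - f y) * (g x - g y)|) ≤
        ∫ y in α..β, V * |G x - G y| := by
      refine integral_mono_on hαβ.le iabs (icont.intervalIntegrable α β) ?_
      intro y hy
      rw [abs_mul]
      exact mul_le_mul (hfV x hx' y (hsub hy)) (hgG x hx' y (hsub hy)) (abs_nonneg _) hV0
    have habsG : ∀ c d : ℝ, IntervalIntegrable (fun y => |G x - G y|) volume c d :=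
      fun c d => ((continuous_const.sub hGcont).abs).intervalIntegrable c d
    have left : (∫ y in α..x, |G x - G y|) = (x - α) * G x - H x := by
      have e : (∫ y in α..x, |G x - G y|) = ∫ y in α..x, (G x - G y) := by
        refine integral_congr fun y hy => ?_
        rw [uIcc_of_le hx.1] at hy
        exact abs_of_nonneg (sub_nonneg.2 (hGmono y x hy.2))
      rw [e, integral_sub intervalIntegrable_const (hGcont.intervalIntegrable α x),
        intervalIntegral.integral_const, ← hHx x]
      simp [smul_eq_mul]
    have right : (∫ y in x..β, |G x - G y|) = (CG - H x) - (β - x) * G x := by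
      have e : (∫ y in x..β, |G x - G y|) = ∫ y in x..β, (G y - G x) := by
        refine integral_congr fun y hy => ?_
        rw [uIcc_of_le hx.2] at hy
        rw [abs_sub_comm]
        exact abs_of_nonneg (sub_nonneg.2 (hGmono x y hy.1))
      rw [e, integral_sub (hGcont.intervalIntegrable x β) intervalIntegrable_const,
        intervalIntegral.integral_const, ← hHdiff x]
      simp [smul_eq_mul]
    have innerG : (∫ y in α..β, |G x - G y|) = (2*x - α - β) * G x - 2 * H x + CG := by
      rw [← integral_add_adjacent_intervals (habsG α x) (habsG x β), left, right]; ring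
    have s3 : (∫ y in α..β, V * |G x - G y|) =
        V * ((2*x - α - β) * G x - 2 * H x + CG) := by
      rw [intervalIntegral.integral_const_mul, innerG]
    exact s1.trans (s2.trans s3.le)
  -- integral estimate
  have hexprint : IntervalIntegrable (fun x => l * (f x * g x) - f x * B - g x * A + C)
      volume α β :=
    (((hfg.const_mul l).sub (hfint.mul_const B)).sub (hgint.mul_const A)).add
      intervalIntegrable_const
  have hlin : Continuous (fun x : ℝ => 2*x - α - β) := by fun_prop
  have hcontExpr : Continuous (fun x => V * ((2*x - α - β) * G x - 2 * H x + CG)) :=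
    continuous_const.mul (((hlin.mul hGcont).sub (continuous_const.mul hHcont)).add continuous_const)
  have hIest : |2 * (l * C - A * B)| ≤
      V * ∫ x in α..β, ((2*x - α - β) * G x - 2 * H x + CG) := by
    rw [← hI]
    calc |∫ x in α..β, (l * (f x * g x) - f x * B - g x * A + C)|
        ≤ ∫ x in α..β, |l * (f x * g x) - f x * B - g x * A + C| :=
          abs_integral_le_integral_abs hαβ.le
      _ ≤ ∫ x in α..β, V * ((2*x - α - β) * G x - 2 * H x + CG) :=
          integral_mono_on hαβ.le hexprint.abs (hcontExpr.intervalIntegrable α β) hptwise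
      _ = V * ∫ x in α..β, ((2*x - α - β) * G x - 2 * H x + CG) :=
          integral_const_mul _ _
  -- integration by parts
  have ixG : IntervalIntegrable (fun x => x * G x) volume α β :=
    (continuous_id.mul hGcont).intervalIntegrable α β
  have hbyparts : (∫ x in α..β, H x) = β * CG - ∫ x in α..β, x * G x := by
    have hHd : ∀ x ∈ uIcc α β, HasDerivAt H (G x) x := fun x _ =>
      integral_hasDerivAt_right (hGcont.intervalIntegrable α x)
        hGcont.aestronglyMeasurable.stronglyMeasurableAtFilter hGcont.continuousAt
    have hid : ∀ x ∈ uIcc α β, HasDerivAt (fun y : ℝ => y) (1:ℝ) x := fun x _ => hasDerivAt_id x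
    have h := integral_mul_deriv_eq_deriv_mul hHd hid (hGcont.intervalIntegrable α β)
      ((continuous_const.intervalIntegrable α β))
    have hHα : H α = 0 := integral_same
    simp only [mul_one] at h
    rw [h, hHα, hHβ,
      show (∫ x in α..β, G x * x) = ∫ x in α..β, x * G x from
        integral_congr fun x _ => mul_comm _ _]
    ring
  have hDeq : (∫ x in α..β, ((2*x - α - β) * G x - 2 * H x + CG)) =
      4 * (∫ x in α..β, x * G x) - 2 * (α + β) * CG := by
    have i1 : IntervalIntegrable (fun x => (2*x - α - β) * G x) volume α β :=
      (hlin.mul hGcont).intervalIntegrable α β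
    have i2 : IntervalIntegrable H volume α β := hHcont.intervalIntegrable α β
    rw [integral_add (i1.sub (i2.const_mul 2)) intervalIntegrable_const,
      integral_sub i1 (i2.const_mul 2), intervalIntegral.integral_const, intervalIntegral.integral_const_mul]
    have e1 : (∫ x in α..β, (2*x - α - β) * G x) =
        2 * (∫ x in α..β, x * G x) - (α + β) * CG := by
      have heq : EqOn (fun x => (2*x - α - β) * G x)
          (fun x => 2 * (x * G x) - (α+β) * G x) (uIcc α β) := fun x _ => by ring
      rw [integral_congr heq, integral_sub (ixG.const_mul 2)
        ((hGcont.intervalIntegrable α β).const_mul (α+β)),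
        intervalIntegral.integral_const_mul, intervalIntegral.integral_const_mul, ← hCGdef]
    rw [e1, hbyparts]
    simp only [smul_eq_mul]
    ring
  set m : ℝ := (α+β)/2 with hmdef
  have hmα : α ≤ m := by rw [hmdef]; linarith
  have hmβ : m ≤ β := by rw [hmdef]; linarith
  have imax : ∀ c d : ℝ, IntervalIntegrable (fun x => max (x - m) 0 * L) volume c d :=
    fun c d => (((continuous_id.sub continuous_const).max continuous_const).mul
      continuous_const).intervalIntegrable c d
  have hDle : 4 * (∫ x in α..β, x * G x) - 2 * (α + β) * CG ≤ L * l^2 / 2 := by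
    have e2 : (∫ x in α..β, (x - m) * G x) = (∫ x in α..β, x * G x) - m * CG := by
      have heq : EqOn (fun x => (x - m) * G x)
          (fun x => x * G x - m * G x) (uIcc α β) := fun x _ => by ring
      rw [integral_congr heq, integral_sub ixG
        ((hGcont.intervalIntegrable α β).const_mul m), intervalIntegral.integral_const_mul, ← hCGdef]
    have hmono : (∫ x in α..β, (x - m) * G x) ≤ ∫ x in α..β, max (x - m) 0 * L := by
      refine integral_mono_on hαβ.le
        (((continuous_id.sub continuous_const).mul hGcont).intervalIntegrable α β)
        (imax α β) ?_
      intro x hx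
      rcases le_total x m with h | h
      · have h1 : (x - m) * G x ≤ 0 :=
          mul_nonpos_iff.2 (Or.inr ⟨by linarith, hG0 x hx⟩)
        have h2 : 0 ≤ max (x - m) 0 * L := mul_nonneg (le_max_right _ _) hL0
        linarith
      · rw [max_eq_left (by linarith : (0:ℝ) ≤ x - m)]
        exact mul_le_mul_of_nonneg_left (hGle x hx) (by linarith)
    have j1 : (∫ x in α..m, max (x - m) 0 * L) = 0 := by
      have heq : EqOn (fun x => max (x - m) 0 * L) (fun _ => (0:ℝ)) (uIcc α m) := by
        intro x hx
        rw [uIcc_of_le hmα] at hx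
        simp [max_eq_right (by linarith [hx.2] : x - m ≤ 0)]
      rw [integral_congr heq, intervalIntegral.integral_zero]
    have j2 : (∫ x in m..β, max (x - m) 0 * L) = (β - m)^2/2 * L := by
      have heq : EqOn (fun x => max (x - m) 0 * L) (fun x => (x - m) * L) (uIcc m β) := by
        intro x hx
        rw [uIcc_of_le hmβ] at hx
        show max (x - m) 0 * L = (x - m) * L
        rw [max_eq_left (by linarith [hx.1] : (0:ℝ) ≤ x - m)]
      rw [integral_congr heq, intervalIntegral.integral_mul_const]
      have hin : (∫ x in m..β, (x - m)) = (β - m)^2/2 := by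
        rw [show (∫ x in m..β, (x - m)) = ∫ x in (m-m)..(β-m), x from
          integral_comp_sub_right (fun x => x) m, integral_id]
        ring
      rw [hin]
    have hval : (∫ x in α..β, max (x - m) 0 * L) = (β - m)^2/2 * L := by
      rw [← integral_add_adjacent_intervals (imax α m) (imax m β), j1, j2, zero_add]
    have hβm : β - m = l/2 := by rw [hmdef, hldef]; ring
    have : (∫ x in α..β, (x - m) * G x) ≤ (β - m)^2/2 * L := by
      rw [← hval]; exact hmono
    rw [hβm] at this
    rw [hmdef] at e2
    nlinarith [this]
  -- conclusion
  have h2' : (∫ x in α..β, ((2*x - α - β) * G x - 2 * H x + CG)) ≤ L * l^2 / 2 := by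
    rw [hDeq]; exact hDle
  have h2 : |2 * (l * C - A * B)| ≤ V * (L * l^2 / 2) :=
    hIest.trans (mul_le_mul_of_nonneg_left h2' hV0)
  have h3 : |l * C - A * B| ≤ V * L * l^2 / 4 := by
    rw [abs_mul, abs_two] at h2; linarith
  have hl0 : l ≠ 0 := ne_of_gt hl
  have hchebeq : cheb f g α β = (l * C - A * B) / (l * l) := by
    rw [cheb, ← hAdef, ← hBdef, ← hCdef, ← hldef]
    field_simp
  rw [hchebeq, abs_div, abs_of_pos (mul_pos hl hl), div_le_iff₀ (mul_pos hl hl)]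
  calc |l * C - A * B| ≤ V * L * l^2 / 4 := h3
    _ = 1/4 * L * V * (l * l) := by ring

theorem stmt4 (f g g' : ℝ → ℝ) (a b u v : ℝ) (hau : a ≤ u) (huv : u < v) (hvb : v ≤ b)
    (hf : BoundedVariationOn f (Icc a b))
    (hg : ∀ x ∈ Icc a b, g x = g a + ∫ t in a..x, g' t)
    (hg'i : IntervalIntegrable g' volume a b) :
    |cheb f g a v - cheb f g u b| ≤
      (1 / 2) * (∫ t in a..b, |g' t|) * totalVar f a b := by
  have hab : a ≤ b := hau.trans (huv.le.trans hvb)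
  have h1 := cheb_bound f g g' a b a v le_rfl (lt_of_le_of_lt hau huv) hvb hf hg hg'i
  have h2 := cheb_bound f g g' a b u b hau (lt_of_lt_of_le huv hvb) le_rfl hf hg hg'i
  have h3 : |cheb f g a v - cheb f g u b| ≤ |cheb f g a v| + |cheb f g u b| := abs_sub _ _
  linarith
end

section
/- Let f : [a,b] → ℝ be of bounded variation and g : [a,b] → ℝ satisfy the Hölder condition |g(x) − g(y)| ≤ H|x − y|^p for all x, y ∈ [a,b], where p ∈ (0,1] and H > 0. Then for all a ≤ u < v ≤ b, |T_a^v(f,g) − T_u^b(f,g)| ≤ H·((v-a)^p + (b-u)^p)/(2^{p+1}(p+1))·V_a^b f. -/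
open MeasureTheory Set intervalIntegral

section Aux
open Real


lemma two_rpow_le {p : ℝ} (hp0 : 0 ≤ p) (hp1 : p ≤ 1) : (2:ℝ) ^ p ≤ 1 + p := by
  have h := convexOn_exp.2 (Set.mem_univ 0) (Set.mem_univ (Real.log 2))
      (by linarith : (0:ℝ) ≤ 1 - p) hp0 (by ring)
  have h2 : (2:ℝ) ^ p = Real.exp (Real.log 2 * p) := Real.rpow_def_of_pos two_pos p
  simp only [smul_eq_mul, mul_zero, zero_add, Real.exp_zero, Real.exp_log two_pos] at h
  rw [h2, mul_comm]
  linarith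

lemma convex_pow_bound {A B L q : ℝ} (hq : 1 ≤ q) (hA : 0 ≤ A) (hB : 0 ≤ B) (hL : A + B = L) :
    L ^ q / 2 ^ (q - 1) ≤ A ^ q + B ^ q := by
  have h := ((convexOn_rpow hq)).2 (Set.mem_Ici.2 hA) (Set.mem_Ici.2 hB)
      (by norm_num : (0:ℝ) ≤ (1:ℝ)/2) (by norm_num : (0:ℝ) ≤ (1:ℝ)/2) (by norm_num)
  simp only [smul_eq_mul] at h
  have hL0 : 0 ≤ L := by linarith
  have h2 : ((1:ℝ)/2 * A + 1/2 * B) = L / 2 := by linarith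
  rw [h2] at h
  have h3 : (L / 2) ^ q = L ^ q / 2 ^ q := Real.div_rpow hL0 (by norm_num : (0:ℝ) ≤ 2) q
  have h4 : (2:ℝ) ^ q = 2 ^ (q - 1) * 2 := by
    rw [← Real.rpow_add_one (by norm_num : (2:ℝ) ≠ 0) (q-1)]; ring_nf
  have h5 : (0:ℝ) < 2 ^ (q - 1) := Real.rpow_pos_of_pos two_pos _
  rw [h3, h4] at h
  have := mul_le_mul_of_nonneg_left h (by norm_num : (0:ℝ) ≤ 2)
  calc L ^ q / 2 ^ (q-1) = 2 * (L ^ q / (2 ^ (q-1) * 2)) := by field_simp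
    _ ≤ 2 * (1/2 * A ^ q + 1/2 * B ^ q) := by linarith
    _ = A ^ q + B ^ q := by ring



lemma final_ineq {H p Lq Aq Bq c : ℝ} (hH : 0 ≤ H) (hp : 0 < p) (hp2 : p ≤ 1) (hLq : 0 ≤ Lq)
    (hc : 0 < c) (hcp : c ≤ p + 3) (hAB : Lq / c ≤ Aq + Bq) :
    H / ((p+1)*(p+2)) * (Lq - Bq - Aq) ≤ H * Lq / (c * (p+1)) := by
  rw [div_mul_eq_mul_div, div_le_div_iff₀ (by positivity) (by positivity)]
  have h1 : Lq - Bq - Aq ≤ Lq * (c - 1) / c := by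
    have h2 : Lq - Lq / c = Lq * (c - 1) / c := by field_simp
    linarith
  have k1 : H * (Lq - Bq - Aq) ≤ H * (Lq * (c-1)/c) := mul_le_mul_of_nonneg_left h1 hH
  calc H * (Lq - Bq - Aq) * (c * (p + 1))
      ≤ (H * (Lq * (c-1)/c)) * (c * (p+1)) := mul_le_mul_of_nonneg_right k1 (by positivity)
    _ = H * Lq * ((c-1)*(p+1)) := by field_simp
    _ ≤ H * Lq * ((p+1)*(p+2)) := by
        refine mul_le_mul_of_nonneg_left ?_ (mul_nonneg hH hLq)
        nlinarith
    _ = H * Lq * ((p+1)*(p+2)) := rfl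

lemma holder_continuousOn {g : ℝ → ℝ} {s : Set ℝ} {H p : ℝ} (hp : 0 < p)
    (hg : ∀ x ∈ s, ∀ y ∈ s, |g x - g y| ≤ H * |x - y| ^ p) : ContinuousOn g s := by
  intro x hx
  have hb : Filter.Tendsto (fun y => H * |y - x| ^ p) (nhdsWithin x s) (nhds 0) := by
    have h1 : Filter.Tendsto (fun y : ℝ => |y - x|) (nhdsWithin x s) (nhds 0) := by
      have hco : Continuous (fun y : ℝ => |y - x|) :=
        (continuous_id.sub continuous_const).abs
      have : Filter.Tendsto (fun y : ℝ => |y - x|) (nhds x) (nhds 0) := by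
        simpa using hco.tendsto x
      exact this.mono_left nhdsWithin_le_nhds
    have h2 : Filter.Tendsto (fun t : ℝ => H * t ^ p) (nhds 0) (nhds 0) := by
      have hc : ContinuousAt (fun t : ℝ => t ^ p) 0 :=
        Real.continuousAt_rpow_const 0 p (Or.inr hp.le)
      have hc2 : ContinuousAt (fun t : ℝ => H * t ^ p) 0 := hc.const_mul H  -- check name
      have := hc2.tendsto
      simpa [Real.zero_rpow hp.ne'] using this
    exact h2.comp h1
  have hsq : Filter.Tendsto (fun y => g y - g x) (nhdsWithin x s) (nhds 0) := by
    apply squeeze_zero_norm' _ hb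
    filter_upwards [self_mem_nhdsWithin] with y hy
    simpa [Real.norm_eq_abs] using hg y hy x hx
  have : Filter.Tendsto g (nhdsWithin x s) (nhds (g x)) := by
    have := hsq.add_const (g x)
    simpa using this
  exact this



lemma abel_key (f Φ : ℝ → ℝ) (α β : ℝ) (hab : α < β)
    (hf : BoundedVariationOn f (Icc α β))
    (hΦ : ContinuousOn Φ (Icc α β))
    (hΦ0 : (∫ t in α..β, Φ t) = 0)
    (S M : ℝ) (hS : ∀ t ∈ Icc α β, |Φ t| ≤ S)
    (hM : ∀ y ∈ Icc α β, |∫ t in α..y, Φ t| ≤ M) :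
    |∫ t in α..β, f t * Φ t| ≤ M * (eVariationOn f (Icc α β)).toReal := by
  set V : ℝ := (eVariationOn f (Icc α β)).toReal with hV
  have hV0 : 0 ≤ V := ENNReal.toReal_nonneg
  have hS0 : 0 ≤ S := le_trans (abs_nonneg _) (hS α ⟨le_refl _, hab.le⟩)
  have hM0 : 0 ≤ M := by
    have := hM α ⟨le_refl _, hab.le⟩
    simpa using this
  -- interval integrability of f on subintervals
  obtain ⟨P, Q, hP, hQ, hfeq⟩ :=
    hf.locallyBoundedVariationOn.exists_monotoneOn_sub_monotoneOn
  have hsub : ∀ {c d : ℝ}, c ∈ Icc α β → d ∈ Icc α β → uIcc c d ⊆ Icc α β := by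
    intro c d hc hd
    rw [uIcc]
    exact Icc_subset_Icc (le_inf hc.1 hd.1) (sup_le hc.2 hd.2)
  have hfint : ∀ {c d : ℝ}, c ∈ Icc α β → d ∈ Icc α β → IntervalIntegrable f volume c d := by
    intro c d hc hd
    rw [hfeq]
    exact ((hP.mono (hsub hc hd)).intervalIntegrable).sub
      ((hQ.mono (hsub hc hd)).intervalIntegrable)
  have hfΦint : ∀ {c d : ℝ}, c ∈ Icc α β → d ∈ Icc α β →
      IntervalIntegrable (fun t => f t * Φ t) volume c d := by
    intro c d hc hd
    exact (hfint hc hd).mul_continuousOn (hΦ.mono (hsub hc hd))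
  -- the main estimate for each n
  have key : ∀ n : ℕ, 0 < n →
      |∫ t in α..β, f t * Φ t| ≤ M * V + S * V * ((β - α) / n) := by
    intro n hn
    set δ : ℝ := (β - α) / n with hδ
    have hδ0 : 0 < δ := div_pos (by linarith) (by exact_mod_cast hn)
    set x : ℕ → ℝ := fun i => α + i * δ with hx
    have hx0 : x 0 = α := by simp [hx]
    have hxn : x n = β := by
      simp only [hx, hδ]
      field_simp
      ring
    have hxm : Monotone x := by
      intro i j hij
      simp only [hx]
      have : (i:ℝ) ≤ j := by exact_mod_cast hij
      nlinarith
    have hxmem : ∀ i, i ≤ n → x i ∈ Icc α β := by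
      intro i hi
      constructor
      · rw [← hx0]; exact hxm (Nat.zero_le i)
      · rw [← hxn]; exact hxm hi
    have hstep : ∀ i : ℕ, x (i+1) - x i = δ := by
      intro i; simp only [hx]; push_cast; ring
    set K : ℝ → ℝ := fun y => ∫ t in α..y, Φ t with hK
    have hK0 : K α = 0 := integral_same
    have hKβ : K β = 0 := hΦ0
    have hΦsub : ∀ {c d : ℝ}, c ∈ Icc α β → d ∈ Icc α β →
        IntervalIntegrable Φ volume c d := by
      intro c d hc hd
      exact (hΦ.mono (hsub hc hd)).intervalIntegrable
    have hKdiff : ∀ i < n, K (x (i+1)) - K (x i) = ∫ t in x i..x (i+1), Φ t := by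
      intro i hi
      have h1 := integral_add_adjacent_intervals
        (hΦsub (⟨le_refl _, hab.le⟩ : α ∈ Icc α β) (hxmem i hi.le))
        (hΦsub (hxmem i hi.le) (hxmem (i+1) hi))
      simp only [hK]
      linarith [h1]
    -- splitting
    have hsplit : (∫ t in α..β, f t * Φ t)
        = ∑ i ∈ Finset.range n, ∫ t in x i..x (i+1), f t * Φ t := by
      rw [← hx0, ← hxn]
      exact (sum_integral_adjacent_intervals (fun k hk =>
        hfΦint (hxmem k hk.le) (hxmem (k+1) hk))).symm
    -- per interval decomposition
    set E : ℕ → ℝ := fun i => ∫ t in x i..x (i+1), (f t - f (x i)) * Φ t with hE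
    have hdecomp : ∀ i < n, (∫ t in x i..x (i+1), f t * Φ t)
        = f (x i) * (K (x (i+1)) - K (x i)) + E i := by
      intro i hi
      rw [hKdiff i hi]
      have h1 : IntervalIntegrable (fun t => f (x i) * Φ t) volume (x i) (x (i+1)) :=
        (hΦsub (hxmem i hi.le) (hxmem (i+1) hi)).const_mul _
      have h2 : IntervalIntegrable (fun t => (f t - f (x i)) * Φ t) volume (x i) (x (i+1)) := by
        have := ((hfint (hxmem i hi.le) (hxmem (i+1) hi)).sub
          (_root_.intervalIntegrable_const (c := f (x i)))).mul_continuousOn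
          (hΦ.mono (hsub (hxmem i hi.le) (hxmem (i+1) hi)))
        exact this
      rw [← intervalIntegral.integral_const_mul, ← intervalIntegral.integral_add h1 h2]
      congr 1
      ext t
      ring
    -- error bound
    set v : ℕ → ℝ := fun i => (eVariationOn f (Icc (x i) (x (i+1)))).toReal with hv
    have hvfin : ∀ i < n, eVariationOn f (Icc (x i) (x (i+1))) ≠ ⊤ := by
      intro i hi
      exact (hf.mono (Icc_subset_Icc (hxmem i hi.le).1 (hxmem (i+1) hi).2))
    have hv0 : ∀ i, 0 ≤ v i := fun i => ENNReal.toReal_nonneg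
    have hEbound : ∀ i < n, |E i| ≤ v i * S * δ := by
      intro i hi
      have hle : x i ≤ x (i+1) := hxm (Nat.le_succ i)
      have hbd : ∀ t ∈ Set.uIoc (x i) (x (i+1)), ‖(f t - f (x i)) * Φ t‖ ≤ v i * S := by
        intro t ht
        rw [Set.uIoc_of_le hle] at ht
        have htIcc : t ∈ Icc (x i) (x (i+1)) := ⟨ht.1.le, ht.2⟩
        have htab : t ∈ Icc α β := ⟨le_trans (hxmem i hi.le).1 htIcc.1,
          le_trans htIcc.2 (hxmem (i+1) hi).2⟩
        have h1 : |f t - f (x i)| ≤ v i := by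
          have := eVariationOn.edist_le f htIcc (⟨le_refl _, hle⟩ : x i ∈ Icc (x i) (x (i+1)))
          have h2 := ENNReal.toReal_mono (hvfin i hi) this
          rwa [edist_dist, ENNReal.toReal_ofReal dist_nonneg, Real.dist_eq] at h2
        have h2 : |Φ t| ≤ S := hS t htab
        rw [Real.norm_eq_abs, abs_mul]
        exact mul_le_mul h1 h2 (abs_nonneg _) (hv0 i)
      have := intervalIntegral.norm_integral_le_of_norm_le_const hbd
      rw [Real.norm_eq_abs] at this
      calc |E i| ≤ v i * S * |x (i+1) - x i| := this
        _ = v i * S * δ := by rw [hstep i, abs_of_pos hδ0]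
    -- sum of variations
    have hsumv : ∑ i ∈ Finset.range n, v i ≤ V := by
      have hEN : ∀ k, k ≤ n → ∑ i ∈ Finset.range k, eVariationOn f (Icc (x i) (x (i+1)))
          = eVariationOn f (Icc α (x k)) := by
        intro k hk
        induction k with
        | zero =>
            have : eVariationOn f (Icc α (x 0)) = 0 := by
              apply eVariationOn.subsingleton
              rw [hx0, Set.Icc_self]
              exact Set.subsingleton_singleton
            simp [this]
        | succ m ih =>
          rw [Finset.sum_range_succ, ih (Nat.le_of_succ_le hk)]
          have h1 := eVariationOn.Icc_add_Icc f (s := univ)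
            (a := α) (b := x m) (c := x (m+1))
            (by rw [← hx0]; exact hxm (Nat.zero_le m)) (hxm (Nat.le_succ m)) (mem_univ _)
          simpa using h1
      have h2 : ∑ i ∈ Finset.range n, eVariationOn f (Icc (x i) (x (i+1)))
          = eVariationOn f (Icc α β) := by rw [hEN n (le_refl n), hxn]
      have h3 : (∑ i ∈ Finset.range n, eVariationOn f (Icc (x i) (x (i+1)))).toReal
          = ∑ i ∈ Finset.range n, v i := by
        rw [ENNReal.toReal_sum]
        intro i hi
        exact hvfin i (Finset.mem_range.mp hi)
      rw [← h3, h2]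
    -- Abel summation
    have habel : |∑ i ∈ Finset.range n, f (x i) * (K (x (i+1)) - K (x i))| ≤ M * V := by
      have hparts := Finset.sum_range_by_parts (f := fun i => f (x i))
        (g := fun i => K (x (i+1)) - K (x i)) (n := n)
      simp only [smul_eq_mul] at hparts
      have htel : ∀ k, ∑ i ∈ Finset.range k, (K (x (i+1)) - K (x i)) = K (x k) - K (x 0) :=
        fun k => Finset.sum_range_sub (fun i => K (x i)) k
      simp only [htel] at hparts
      rw [hx0, hK0, hxn, hKβ] at hparts
      simp only [sub_zero, zero_sub, mul_zero, zero_sub] at hparts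
      rw [hparts, abs_neg]
      calc |∑ i ∈ Finset.range (n-1), (f (x (i+1)) - f (x i)) * K (x (i+1))|
          ≤ ∑ i ∈ Finset.range (n-1), |(f (x (i+1)) - f (x i))| * |K (x (i+1))| := by
            refine le_trans (Finset.abs_sum_le_sum_abs _ _) ?_
            apply Finset.sum_le_sum
            intro i _
            rw [abs_mul]
        _ ≤ ∑ i ∈ Finset.range (n-1), |(f (x (i+1)) - f (x i))| * M := by
            apply Finset.sum_le_sum
            intro i hi
            have hi' := Finset.mem_range.mp hi
            refine mul_le_mul_of_nonneg_left ?_ (abs_nonneg _)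
            exact hM _ (hxmem (i+1) (by omega))
        _ = (∑ i ∈ Finset.range (n-1), |(f (x (i+1)) - f (x i))|) * M := by
            rw [Finset.sum_mul]
        _ ≤ V * M := by
            refine mul_le_mul_of_nonneg_right ?_ hM0
            have hvar := eVariationOn.sum_le_of_monotoneOn_Iic (f := f) (s := Icc α β)
              (n := n - 1) (u := x) (hxm.monotoneOn _)
              (fun i hi => hxmem i (by omega))
            have h4 : (∑ i ∈ Finset.range (n-1), edist (f (x (i+1))) (f (x i))).toReal
                = ∑ i ∈ Finset.range (n-1), |(f (x (i+1)) - f (x i))| := by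
              rw [ENNReal.toReal_sum (fun i _ => edist_ne_top _ _)]
              exact Finset.sum_congr rfl fun i _ => by
                rw [edist_dist, ENNReal.toReal_ofReal dist_nonneg, Real.dist_eq]
            rw [← h4]
            exact ENNReal.toReal_mono hf hvar
        _ = M * V := mul_comm _ _
    -- combine
    calc |∫ t in α..β, f t * Φ t|
        = |∑ i ∈ Finset.range n, (f (x i) * (K (x (i+1)) - K (x i)) + E i)| := by
          rw [hsplit]
          congr 1
          exact Finset.sum_congr rfl (fun i hi => hdecomp i (Finset.mem_range.mp hi))
      _ ≤ |∑ i ∈ Finset.range n, f (x i) * (K (x (i+1)) - K (x i))|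
            + |∑ i ∈ Finset.range n, E i| := by
          rw [Finset.sum_add_distrib]
          exact abs_add_le _ _
      _ ≤ M * V + S * V * δ := by
          refine add_le_add habel ?_
          calc |∑ i ∈ Finset.range n, E i| ≤ ∑ i ∈ Finset.range n, |E i| :=
              Finset.abs_sum_le_sum_abs _ _
            _ ≤ ∑ i ∈ Finset.range n, v i * S * δ := by
              apply Finset.sum_le_sum
              intro i hi
              exact hEbound i (Finset.mem_range.mp hi)
            _ = (∑ i ∈ Finset.range n, v i) * (S * δ) := by
              rw [Finset.sum_mul]
              exact Finset.sum_congr rfl (fun i _ => by ring)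
            _ ≤ V * (S * δ) := by
              refine mul_le_mul_of_nonneg_right hsumv (by positivity)
            _ = S * V * δ := by ring
  -- take the limit n → ∞
  have hlim : Filter.Tendsto (fun n : ℕ => M * V + S * V * ((β - α) / (n+1)))
      Filter.atTop (nhds (M * V)) := by
    have h1 : Filter.Tendsto (fun n : ℕ => ((β - α) * (1/(n+1)) : ℝ)) Filter.atTop
        (nhds ((β - α) * 0)) := tendsto_one_div_add_atTop_nhds_zero_nat.const_mul _
    have h2 := (h1.const_mul (S * V)).const_add (M * V)
    simp only [mul_zero, add_zero] at h2
    convert h2 using 2 with n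
    ring
  refine ge_of_tendsto hlim ?_
  filter_upwards with n
  have := key (n+1) (Nat.succ_pos n)
  push_cast at this ⊢
  convert this using 3


lemma K_bound (g : ℝ → ℝ) (α β p H : ℝ) (hab : α < β) (hp : 0 < p) (hp1 : p ≤ 1) (hH : 0 ≤ H)
    (hg : ∀ x' ∈ Icc α β, ∀ y ∈ Icc α β, |g x' - g y| ≤ H * |x' - y| ^ p)
    {x : ℝ} (hx : x ∈ Icc α β) :
    |∫ t in α..x, (g t - (β - α)⁻¹ * ∫ s in α..β, g s)| ≤
      H * (β - α) ^ (p + 1) / (2 ^ (p + 1) * (p + 1)) := by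
  have hgc : ContinuousOn g (Icc α β) := holder_continuousOn hp hg
  have hL : (0:ℝ) < β - α := by linarith
  have hsub : ∀ {c d : ℝ}, c ∈ Icc α β → d ∈ Icc α β → uIcc c d ⊆ Icc α β := by
    intro c d hc hd
    rw [uIcc]
    exact Icc_subset_Icc (le_inf hc.1 hd.1) (sup_le hc.2 hd.2)
  have hmem : ∀ {c d : ℝ}, c ∈ Icc α β → d ∈ Icc α β → IntervalIntegrable g volume c d :=
    fun hc hd => (hgc.mono (hsub hc hd)).intervalIntegrable
  have hαm : α ∈ Icc α β := ⟨le_refl _, hab.le⟩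
  have hβm : β ∈ Icc α β := ⟨hab.le, le_refl _⟩
  set I : ℝ := ∫ s in α..β, g s with hI
  set gb : ℝ := (β - α)⁻¹ * I with hgb
  -- step 1 : the integral equals ∫ F / (β - α)
  set F : ℝ → ℝ := fun t => (β - x) * g t - ∫ s in x..β, g s with hF
  have step1 : (β - α) * (∫ t in α..x, (g t - gb)) = ∫ t in α..x, F t := by
    have e1 : (∫ t in α..x, (g t - gb)) = (∫ t in α..x, g t) - (x - α) * gb := by
      rw [intervalIntegral.integral_sub (hmem hαm hx) intervalIntegrable_const,
        intervalIntegral.integral_const, smul_eq_mul]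
    have e2 : (∫ t in α..x, F t) = (β - x) * (∫ t in α..x, g t)
        - (x - α) * (∫ s in x..β, g s) := by
      rw [hF]
      rw [intervalIntegral.integral_sub ((hmem hαm hx).const_mul _) intervalIntegrable_const,
        intervalIntegral.integral_const_mul, intervalIntegral.integral_const, smul_eq_mul]
    have e3 : (∫ t in α..x, g t) + (∫ s in x..β, g s) = I :=
      integral_add_adjacent_intervals (hmem hαm hx) (hmem hx hβm)
    have e4 : (β - α) * gb = I := by
      rw [hgb]
      field_simp
    rw [e1, e2]
    have e5 : (β - α) * ((∫ t in α..x, g t) - (x - α) * gb)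
        = (β - α) * (∫ t in α..x, g t) - (x - α) * ((β - α) * gb) := by ring
    rw [e5, e4, ← e3]
    ring
  -- pointwise bound on F
  have hFpt : ∀ t ∈ Icc α x, |F t| ≤ H * ((β - t) ^ (p+1) - (x - t) ^ (p+1)) / (p+1) := by
    intro t ht
    have htab : t ∈ Icc α β := ⟨ht.1, le_trans ht.2 hx.2⟩
    have hFe : F t = ∫ s in x..β, (g t - g s) := by
      rw [hF, intervalIntegral.integral_sub intervalIntegrable_const (hmem hx hβm),
        intervalIntegral.integral_const, smul_eq_mul]
    have hxb : x ≤ β := hx.2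
    have hcont1 : ContinuousOn (fun s => |g t - g s|) (uIcc x β) :=
      ((continuousOn_const.sub (hgc.mono (hsub hx hβm))).abs)
    have hcont2 : ContinuousOn (fun s : ℝ => H * (s - t) ^ p) (uIcc x β) := by
      apply ContinuousOn.mul continuousOn_const
      intro s hs
      exact (((continuous_id.sub continuous_const).continuousAt).rpow_const
        (Or.inr hp.le)).continuousWithinAt
    have h1 : |F t| ≤ ∫ s in x..β, |g t - g s| := by
      rw [hFe]
      exact intervalIntegral.abs_integral_le_integral_abs hxb
    have h2 : (∫ s in x..β, |g t - g s|) ≤ ∫ s in x..β, H * (s - t) ^ p := by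
      apply intervalIntegral.integral_mono_on hxb hcont1.intervalIntegrable
        hcont2.intervalIntegrable
      intro s hs
      have hsab : s ∈ Icc α β := ⟨le_trans htab.1 (le_trans ht.2 hs.1), hs.2⟩
      have hts : t ≤ s := le_trans ht.2 hs.1
      have := hg t htab s hsab
      rwa [abs_of_nonpos (by linarith : t - s ≤ 0), neg_sub] at this
    have h3 : (∫ s in x..β, H * (s - t) ^ p)
        = H * ((β - t) ^ (p+1) - (x - t) ^ (p+1)) / (p+1) := by
      rw [intervalIntegral.integral_const_mul]
      have h4 : (∫ s in x..β, (s - t) ^ p) = ∫ y in x - t..β - t, y ^ p :=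
        intervalIntegral.integral_comp_sub_right (fun y => y ^ p) t
      rw [h4, integral_rpow (Or.inl (by linarith : (-1:ℝ) < p))]
      ring
    calc |F t| ≤ ∫ s in x..β, |g t - g s| := h1
      _ ≤ ∫ s in x..β, H * (s - t) ^ p := h2
      _ = H * ((β - t) ^ (p+1) - (x - t) ^ (p+1)) / (p+1) := h3
  -- integrate the pointwise bound
  have hαx : α ≤ x := hx.1
  set G : ℝ → ℝ := fun t => H / (p+1) * ((β - t) ^ (p+1) - (x - t) ^ (p+1)) with hG
  have hrp : ∀ c : ℝ, ContinuousOn (fun t : ℝ => (c - t) ^ (p+1)) (uIcc α x) := by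
    intro c t ht
    exact (((continuous_const.sub continuous_id).continuousAt).rpow_const
      (Or.inr (by linarith))).continuousWithinAt
  have hGcont : ContinuousOn G (uIcc α x) :=
    continuousOn_const.mul ((hrp β).sub (hrp x))
  have hFcont : ContinuousOn F (uIcc α x) :=
    (continuousOn_const.mul (hgc.mono (hsub hαm hx))).sub continuousOn_const
  have h5 : |∫ t in α..x, F t| ≤ ∫ t in α..x, G t := by
    calc |∫ t in α..x, F t| ≤ ∫ t in α..x, |F t| :=
        intervalIntegral.abs_integral_le_integral_abs hαx
      _ ≤ ∫ t in α..x, G t := by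
        apply intervalIntegral.integral_mono_on hαx hFcont.abs.intervalIntegrable
          hGcont.intervalIntegrable
        intro t ht
        exact le_trans (hFpt t ht) (le_of_eq (by rw [hG]; ring))
  have hexp : p + 1 + 1 = p + 2 := by ring
  have hGval : (∫ t in α..x, G t) = H / ((p+1)*(p+2)) *
      ((β-α) ^ (p+2) - (β-x) ^ (p+2) - (x-α) ^ (p+2)) := by
    have c1 : (∫ t in α..x, (β - t) ^ (p+1))
        = ((β-α) ^ (p+2) - (β-x) ^ (p+2)) / (p+2) := by
      have e := intervalIntegral.integral_comp_sub_left (a := α) (b := x)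
        (fun y => y ^ (p+1)) β
      rw [e, integral_rpow (Or.inl (by linarith : (-1:ℝ) < p+1)), hexp]
    have c2 : (∫ t in α..x, (x - t) ^ (p+1)) = (x-α) ^ (p+2) / (p+2) := by
      have e := intervalIntegral.integral_comp_sub_left (a := α) (b := x)
        (fun y => y ^ (p+1)) x
      rw [e, sub_self, integral_rpow (Or.inl (by linarith : (-1:ℝ) < p+1)), hexp,
        Real.zero_rpow (by positivity : p + 2 ≠ 0)]
      ring
    rw [hG]
    rw [intervalIntegral.integral_const_mul,
      intervalIntegral.integral_sub ((hrp β).intervalIntegrable) ((hrp x).intervalIntegrable),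
      c1, c2]
    field_simp
  -- the convexity estimate
  have hcpos : (0:ℝ) < 2 ^ (p+1) := Real.rpow_pos_of_pos two_pos _
  have hc3 : (2:ℝ) ^ (p+1) ≤ p + 3 := by
    have h6 : (2:ℝ) ^ (p+1) = 2 ^ p * 2 := Real.rpow_add_one (by norm_num) p
    have h7 := two_rpow_le hp.le hp1
    nlinarith
  have hAB : (β-α) ^ (p+2) / 2 ^ (p+1) ≤ (x-α) ^ (p+2) + (β-x) ^ (p+2) := by
    have h8 := convex_pow_bound (A := x - α) (B := β - x) (L := β - α) (q := p + 2)
      (by linarith) (by linarith [hx.1]) (by linarith [hx.2]) (by ring)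
    have h9 : p + 2 - 1 = p + 1 := by ring
    rwa [h9] at h8
  have hfin := final_ineq (Bq := (β-x) ^ (p+2)) (Aq := (x-α) ^ (p+2)) hH hp hp1
    (Real.rpow_nonneg hL.le _) hcpos hc3 hAB
  have hFle : |∫ t in α..x, F t| ≤ H * (β-α) ^ (p+2) / (2 ^ (p+1) * (p+1)) := by
    calc |∫ t in α..x, F t| ≤ ∫ t in α..x, G t := h5
      _ = H / ((p+1)*(p+2)) * ((β-α) ^ (p+2) - (β-x) ^ (p+2) - (x-α) ^ (p+2)) := hGval
      _ ≤ H * (β-α) ^ (p+2) / (2 ^ (p+1) * (p+1)) := hfin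
  -- conclude
  have habs : (β - α) * |∫ t in α..x, (g t - gb)| = |∫ t in α..x, F t| := by
    rw [← step1, abs_mul, abs_of_pos hL]
  rw [← mul_le_mul_iff_right₀ hL, habs]
  calc |∫ t in α..x, F t| ≤ H * (β-α) ^ (p+2) / (2 ^ (p+1) * (p+1)) := hFle
    _ = (β - α) * (H * (β-α) ^ (p+1) / (2 ^ (p+1) * (p+1))) := by
        rw [← hexp, Real.rpow_add_one hL.ne' (p+1)]
        ring


lemma cheb_bound_s6 (f g : ℝ → ℝ) (α β p H : ℝ) (hab : α < β) (hp : 0 < p) (hp1 : p ≤ 1)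
    (hH : 0 ≤ H) (hf : BoundedVariationOn f (Icc α β))
    (hg : ∀ x ∈ Icc α β, ∀ y ∈ Icc α β, |g x - g y| ≤ H * |x - y| ^ p) :
    |cheb f g α β| ≤ H * (β - α) ^ p / (2 ^ (p+1) * (p+1)) *
      (eVariationOn f (Icc α β)).toReal := by
  have hL : (0:ℝ) < β - α := by linarith
  have hgc : ContinuousOn g (Icc α β) := holder_continuousOn hp hg
  have hαm : α ∈ Icc α β := ⟨le_refl _, hab.le⟩
  have hβm : β ∈ Icc α β := ⟨hab.le, le_refl _⟩
  have hsub : ∀ {c d : ℝ}, c ∈ Icc α β → d ∈ Icc α β → uIcc c d ⊆ Icc α β := by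
    intro c d hc hd
    rw [uIcc]
    exact Icc_subset_Icc (le_inf hc.1 hd.1) (sup_le hc.2 hd.2)
  have hgint : IntervalIntegrable g volume α β := (hgc.mono (hsub hαm hβm)).intervalIntegrable
  obtain ⟨P, Q, hP, hQ, hfeq⟩ :=
    hf.locallyBoundedVariationOn.exists_monotoneOn_sub_monotoneOn
  have hfint : IntervalIntegrable f volume α β := by
    rw [hfeq]
    exact ((hP.mono (hsub hαm hβm)).intervalIntegrable).sub
      ((hQ.mono (hsub hαm hβm)).intervalIntegrable)
  set gb : ℝ := (β - α)⁻¹ * ∫ s in α..β, g s with hgb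
  set Φ : ℝ → ℝ := fun t => g t - gb with hΦdef
  have hΦc : ContinuousOn Φ (Icc α β) := hgc.sub continuousOn_const
  have hΦ0 : (∫ t in α..β, Φ t) = 0 := by
    rw [hΦdef]
    simp only
    rw [intervalIntegral.integral_sub hgint intervalIntegrable_const,
      intervalIntegral.integral_const, smul_eq_mul, hgb]
    field_simp
    ring
  have hS : ∀ t ∈ Icc α β, |Φ t| ≤ H * (β - α) ^ p := by
    intro t ht
    have he : Φ t = (β - α)⁻¹ * ∫ s in α..β, (g t - g s) := by
      rw [intervalIntegral.integral_sub intervalIntegrable_const hgint,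
        intervalIntegral.integral_const, smul_eq_mul, hΦdef]
      simp only
      rw [hgb]
      field_simp
    have hb : ∀ s ∈ Set.uIoc α β, ‖g t - g s‖ ≤ H * (β - α) ^ p := by
      intro s hs
      rw [Set.uIoc_of_le hab.le] at hs
      have hsm : s ∈ Icc α β := ⟨hs.1.le, hs.2⟩
      refine le_trans (hg t ht s hsm) ?_
      refine mul_le_mul_of_nonneg_left ?_ hH
      refine Real.rpow_le_rpow (abs_nonneg _) ?_ hp.le
      rw [abs_le]
      constructor <;> [linarith [ht.1, ht.2, hsm.1, hsm.2]; linarith [ht.1, ht.2, hsm.1, hsm.2]]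
    have := intervalIntegral.norm_integral_le_of_norm_le_const hb
    rw [Real.norm_eq_abs] at this
    rw [he, abs_mul, abs_inv, abs_of_pos hL]
    calc (β - α)⁻¹ * |∫ s in α..β, (g t - g s)|
        ≤ (β - α)⁻¹ * (H * (β - α) ^ p * |β - α|) := by
          refine mul_le_mul_of_nonneg_left this (by positivity)
      _ = H * (β - α) ^ p := by
          rw [abs_of_pos hL]
          field_simp
  have hM : ∀ y ∈ Icc α β, |∫ t in α..y, Φ t| ≤ H * (β - α) ^ (p+1) / (2 ^ (p+1) * (p+1)) :=
    fun y hy => K_bound g α β p H hab hp hp1 hH hg hy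
  have hkey := abel_key f Φ α β hab hf hΦc hΦ0 _ _ hS hM
  -- identify cheb with the integral
  have hid : cheb f g α β = (β - α)⁻¹ * ∫ t in α..β, f t * Φ t := by
    have e1 : (∫ t in α..β, f t * Φ t)
        = (∫ t in α..β, f t * g t) - gb * ∫ t in α..β, f t := by
      have e2 : (∫ t in α..β, f t * Φ t) = ∫ t in α..β, (f t * g t - gb * f t) := by
        congr 1
        funext t
        rw [hΦdef]
        ring
      rw [e2, intervalIntegral.integral_sub
        (hfint.mul_continuousOn (hgc.mono (hsub hαm hβm))) (hfint.const_mul gb),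
        intervalIntegral.integral_const_mul]
    rw [e1, cheb, hgb]
    ring
  rw [hid, abs_mul, abs_inv, abs_of_pos hL]
  calc (β - α)⁻¹ * |∫ t in α..β, f t * Φ t|
      ≤ (β - α)⁻¹ * (H * (β - α) ^ (p+1) / (2 ^ (p+1) * (p+1)) *
        (eVariationOn f (Icc α β)).toReal) := by
        refine mul_le_mul_of_nonneg_left hkey (by positivity)
    _ = H * (β - α) ^ p / (2 ^ (p+1) * (p+1)) * (eVariationOn f (Icc α β)).toReal := by
        rw [Real.rpow_add_one hL.ne' p]
        field_simp

end Aux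

theorem stmt6 (f g : ℝ → ℝ) (a b u v p H : ℝ) (hau : a ≤ u) (huv : u < v) (hvb : v ≤ b)
    (hp : 0 < p) (hp1 : p ≤ 1) (hH : 0 < H)
    (hf : BoundedVariationOn f (Icc a b))
    (hg : ∀ x ∈ Icc a b, ∀ y ∈ Icc a b, |g x - g y| ≤ H * |x - y| ^ p) :
    |cheb f g a v - cheb f g u b| ≤
      H * (((v - a) ^ p + (b - u) ^ p) / (2 ^ (p + 1) * (p + 1))) * totalVar f a b := by
  have hav : a < v := lt_of_le_of_lt hau huv
  have hub : u < b := lt_of_lt_of_le huv hvb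
  have hsub1 : Icc a v ⊆ Icc a b := Icc_subset_Icc (le_refl _) hvb
  have hsub2 : Icc u b ⊆ Icc a b := Icc_subset_Icc hau (le_refl _)
  have hT0 : 0 ≤ totalVar f a b := ENNReal.toReal_nonneg
  have h1 : |cheb f g a v| ≤ H * (v - a) ^ p / (2 ^ (p+1) * (p+1)) * totalVar f a b := by
    refine le_trans (cheb_bound_s6 f g a v p H hav hp hp1 hH.le (hf.mono hsub1)
      (fun x hx y hy => hg x (hsub1 hx) y (hsub1 hy))) ?_
    refine mul_le_mul_of_nonneg_left ?_ (div_nonneg (mul_nonneg hH.le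
      (Real.rpow_nonneg (by linarith) p)) (by positivity))
    exact ENNReal.toReal_mono hf (eVariationOn.mono f hsub1)
  have h2 : |cheb f g u b| ≤ H * (b - u) ^ p / (2 ^ (p+1) * (p+1)) * totalVar f a b := by
    refine le_trans (cheb_bound_s6 f g u b p H hub hp hp1 hH.le (hf.mono hsub2)
      (fun x hx y hy => hg x (hsub2 hx) y (hsub2 hy))) ?_
    refine mul_le_mul_of_nonneg_left ?_ (div_nonneg (mul_nonneg hH.le
      (Real.rpow_nonneg (by linarith) p)) (by positivity))
    exact ENNReal.toReal_mono hf (eVariationOn.mono f hsub2)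
  calc |cheb f g a v - cheb f g u b| ≤ |cheb f g a v| + |cheb f g u b| := abs_sub _ _
    _ ≤ H * (v - a) ^ p / (2 ^ (p+1) * (p+1)) * totalVar f a b
        + H * (b - u) ^ p / (2 ^ (p+1) * (p+1)) * totalVar f a b := add_le_add h1 h2
    _ = H * (((v - a) ^ p + (b - u) ^ p) / (2 ^ (p + 1) * (p + 1))) * totalVar f a b := by
        ring
end

section
/- Let f : [a,b] → ℝ be of bounded variation and g : [a,b] → ℝ be monotone nondecreasing. Then for all a ≤ u < v ≤ b, |T_a^v(f,g) − T_u^b(f,g)| ≤ (1/4)·{ [(g(v) − g(a)) + (g(b) − g(u))]/2 + | (g(v)+g(u))/2 − (g(a)+g(b))/2 | }·V_a^b f. -/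
open MeasureTheory Set intervalIntegral

namespace Stmt9Aux

/-- clamp into `[a,b]` -/
def cl (a b t : ℝ) : ℝ := min (max t a) b

lemma cl_mono (a b : ℝ) : Monotone (cl a b) :=
  fun _ _ h => min_le_min (max_le_max h le_rfl) le_rfl

lemma cl_mem {a b : ℝ} (hab : a ≤ b) (t : ℝ) : cl a b t ∈ Icc a b :=
  ⟨le_min (le_max_right _ _) hab, min_le_right _ _⟩

lemma cl_eq {a b t : ℝ} (ht : t ∈ Icc a b) : cl a b t = t := by
  unfold cl; rw [max_eq_left ht.1, min_eq_left ht.2]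

lemma ext_mono {h : ℝ → ℝ} {a b : ℝ} (hab : a ≤ b) (hm : MonotoneOn h (Icc a b)) :
    Monotone (fun t => h (cl a b t)) :=
  fun x y hxy => hm (cl_mem hab x) (cl_mem hab y) (cl_mono a b hxy)

lemma intOn {m : ℝ → ℝ} (hm : Monotone m) (α β : ℝ) : IntegrableOn m (Ioc α β) volume :=
  ((hm.monotoneOn _).integrableOn_isCompact isCompact_Icc).mono_set Ioc_subset_Icc_self

lemma intConst (c : ℝ) (α β : ℝ) : IntegrableOn (fun _ => c) (Ioc α β) volume :=
  integrableOn_const measure_Ioc_lt_top.ne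

lemma intConstVal {c α β : ℝ} (h : α ≤ β) : ∫ _ in Ioc α β, c = (β - α) * c := by
  rw [setIntegral_const, Real.volume_real_Ioc_of_le h, smul_eq_mul]

lemma int_lb {G : ℝ → ℝ} (hG : Monotone G) {α β : ℝ} (h : α ≤ β) :
    (β - α) * G α ≤ ∫ s in Ioc α β, G s := by
  rw [← intConstVal (c := G α) h]
  exact setIntegral_mono_on (intConst _ _ _) (intOn hG α β) measurableSet_Ioc
    (fun x hx => hG hx.1.le)

lemma int_ub {G : ℝ → ℝ} (hG : Monotone G) {α β : ℝ} (h : α ≤ β) :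
    (∫ s in Ioc α β, G s) ≤ (β - α) * G β := by
  rw [← intConstVal (c := G β) h]
  exact setIntegral_mono_on (intOn hG α β) (intConst _ _ _) measurableSet_Ioc
    (fun x hx => hG hx.2)

lemma quarter {S x y A B : ℝ} (hS : 0 ≤ S) (hx : 0 ≤ x) (hy : 0 ≤ y) (hA : 0 ≤ A) (hB : 0 ≤ B)
    (h1 : S ≤ x * A) (h2 : S ≤ y * B) : S ≤ (x + y) * (A + B) / 4 := by
  have h16 : 16 * S^2 ≤ ((x+y)*(A+B))^2 := by
    nlinarith [mul_le_mul h1 h2 hS (mul_nonneg hx hA),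
      mul_nonneg (mul_nonneg hA hB) (sq_nonneg (x - y)), sq_nonneg ((x+y)*(A-B))]
  have hT : 0 ≤ (x + y) * (A + B) := mul_nonneg (by linarith) (by linarith)
  nlinarith [h16, hT, hS]

/-- Core bound: the partial integral of `G - μ` (with `μ` the mean of `G`) is between
`-(β-α)(G β - G α)/4` and `0`. -/
lemma core {G : ℝ → ℝ} (hG : Monotone G) {α β t : ℝ} (hαβ : α < β) (hαt : α ≤ t) (htβ : t ≤ β)
    {μ : ℝ} (hμ : μ = (β - α)⁻¹ * ∫ s in Ioc α β, G s) :
    -((β - α) * (G β - G α) / 4) ≤ (∫ s in Ioc α t, (G s - μ)) ∧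
      (∫ s in Ioc α t, (G s - μ)) ≤ 0 := by
  set Iαt := ∫ s in Ioc α t, G s with hIαt
  set Itβ := ∫ s in Ioc t β, G s with hItβ
  have hsplit : Iαt + Itβ = ∫ s in Ioc α β, G s := by
    rw [hIαt, hItβ, ← setIntegral_union (Ioc_disjoint_Ioc_of_le le_rfl) measurableSet_Ioc
      (intOn hG α t) (intOn hG t β), Ioc_union_Ioc_eq_Ioc hαt htβ]
  set x := t - α with hxdef
  set y := β - t with hydef
  have hx : 0 ≤ x := sub_nonneg.2 hαt
  have hy : 0 ≤ y := sub_nonneg.2 htβ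
  have hL : 0 < x + y := by simp only [hxdef, hydef]; linarith
  have hμL : (x + y) * μ = Iαt + Itβ := by
    have hne : β - α ≠ 0 := ne_of_gt (by linarith)
    rw [hμ, hsplit]
    have : x + y = β - α := by ring
    rw [this]
    field_simp
  have hE : (∫ s in Ioc α t, (G s - μ)) = Iαt - x * μ := by
    rw [integral_sub (intOn hG α t) (intConst μ α t), intConstVal hαt, hIαt]
  have f1 : Iαt ≤ x * G t := int_ub hG hαt
  have f2 : x * G α ≤ Iαt := int_lb hG hαt
  have f3 : y * G t ≤ Itβ := int_lb hG htβ
  have f4 : Itβ ≤ y * G β := int_ub hG htβ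
  have hxμL : x * ((x + y) * μ) = x * (Iαt + Itβ) := by rw [hμL]
  have key : (x + y) * (Iαt - x * μ) ≤ 0 := by
    linarith [mul_le_mul_of_nonneg_left f1 hy, mul_le_mul_of_nonneg_left f3 hx, hxμL]
  have hupper : Iαt - x * μ ≤ 0 := by
    by_contra hcon
    push_neg at hcon
    linarith [key, mul_pos hL hcon]
  constructor
  · -- lower bound
    set S := x * μ - Iαt with hSdef
    have hS : 0 ≤ S := by simp only [hSdef]; linarith
    have hA : 0 ≤ μ - G α := by
      have hyα : y * G α ≤ y * G t := mul_le_mul_of_nonneg_left (hG hαt) hy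
      have : 0 ≤ (x + y) * (μ - G α) := by linarith [hμL, f2, f3]
      exact (mul_nonneg_iff_of_pos_left hL).1 this
    have hB : 0 ≤ G β - μ := by
      have h1' : Iαt ≤ x * G β := f1.trans (mul_le_mul_of_nonneg_left (hG htβ) hx)
      have : 0 ≤ (x + y) * (G β - μ) := by linarith [hμL, h1', f4]
      exact (mul_nonneg_iff_of_pos_left hL).1 this
    have h1 : S ≤ x * (μ - G α) := by simp only [hSdef]; linarith [f2]
    have h2 : S ≤ y * (G β - μ) := by simp only [hSdef]; linarith [f4, hμL]
    have := quarter hS hx hy hA hB h1 h2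
    have heq : (x + y) * ((μ - G α) + (G β - μ)) = (β - α) * (G β - G α) := by
      simp only [hxdef, hydef]; ring
    rw [hE]
    simp only [hSdef] at this
    rw [heq] at this
    linarith
  · rw [hE]; exact hupper

open Function in
/-- Stieltjes-type second mean value bound: if `Φ` has zero integral on `(a,b]` and its
primitive is bounded by `C`, then `|∫ m Φ| ≤ C (m b - m a)` for monotone `m`. -/
lemma ST9 {m Φ : ℝ → ℝ} (hm : Monotone m) {a b : ℝ} (hab : a ≤ b)
    (hmb : Function.rightLim m b ≤ m b)
    (hΦm : Measurable Φ) (hΦ : IntegrableOn Φ (Ioc a b) volume)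
    (hΦ0 : (∫ t in Ioc a b, Φ t) = 0) {C : ℝ} (hC : 0 ≤ C)
    (hP : ∀ t ∈ Icc a b, |∫ s in Ioc a t, Φ s| ≤ C) :
    |∫ t in Ioc a b, m t * Φ t| ≤ C * (m b - m a) := by
  classical
  set F := hm.stieltjesFunction with hFdef
  set ν := F.measure.restrict (Ioc a b) with hνdef
  haveI : IsFiniteMeasure ν := ⟨by
    rw [hνdef, Measure.restrict_apply_univ, F.measure_Ioc]
    exact ENNReal.ofReal_lt_top⟩
  have hFm : ∀ x y : ℝ, x ≤ y → F x ≤ F y := fun x y h => F.mono h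
  -- m = F a.e.
  have hcount : {x | ¬ContinuousWithinAt m (Ioi x) x}.Countable :=
    by simpa using (hm.monotoneOn univ).countable_not_continuousWithinAt_Ioi
  have hae : (fun t => m t * Φ t) =ᵐ[volume.restrict (Ioc a b)] fun t => F t * Φ t := by
    apply ae_restrict_of_ae
    have h0 : ∀ᵐ x ∂(volume : Measure ℝ), x ∉ {x | ¬ContinuousWithinAt m (Ioi x) x} := by
      rw [ae_iff]
      simpa [not_not] using hcount.measure_zero volume
    filter_upwards [h0] with x hx
    have : ContinuousWithinAt m (Ioi x) x := not_not.1 hx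
    rw [hFdef, hm.stieltjesFunction_eq, hm.continuousWithinAt_Ioi_iff_rightLim_eq.1 this]
  rw [integral_congr_ae hae]
  -- the product kernel
  set U : ℝ × ℝ → ℝ := fun p => (Iic p.1).indicator 1 p.2 * Φ p.1 with hUdef
  have hUmeas : Measurable U := by
    have hs : MeasurableSet {p : ℝ × ℝ | p.2 ≤ p.1} := measurableSet_le measurable_snd measurable_fst
    have : U = fun p : ℝ × ℝ => ({p : ℝ × ℝ | p.2 ≤ p.1}.indicator 1 p) * Φ p.1 := by
      funext p
      simp only [hUdef, Set.indicator_apply, mem_Iic, mem_setOf_eq, Pi.one_apply]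
    rw [this]
    exact ((measurable_one.indicator hs)).mul (hΦm.comp measurable_fst)
  set μ₀ := volume.restrict (Ioc a b) with hμ₀def
  have hU : Integrable U (μ₀.prod ν) := by
    rw [integrable_prod_iff hUmeas.aestronglyMeasurable]
    constructor
    · refine Filter.Eventually.of_forall fun t => ?_
      exact (((integrable_const (1:ℝ)).indicator measurableSet_Iic)).mul_const (Φ t)
    · apply Integrable.mono' ((hΦ.norm.const_mul ((ν univ).toReal)))
        ((hUmeas.aestronglyMeasurable.norm).integral_prod_right')
      refine Filter.Eventually.of_forall fun t => ?_
      have hpt : ∀ s : ℝ, ‖U (t, s)‖ ≤ (Iic t).indicator 1 s * ‖Φ t‖ := by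
        intro s
        simp only [hUdef, norm_mul, Set.indicator_apply, mem_Iic, Pi.one_apply]
        split_ifs <;> simp
      have h1 : (∫ s, ‖U (t, s)‖ ∂ν) ≤ ∫ s, (Iic t).indicator 1 s * ‖Φ t‖ ∂ν := by
        apply integral_mono_of_nonneg (Filter.Eventually.of_forall fun s => norm_nonneg _)
          (((integrable_const (1:ℝ)).indicator measurableSet_Iic).mul_const _)
          (Filter.Eventually.of_forall hpt)
      have h2 : (∫ s, (Iic t).indicator 1 s * ‖Φ t‖ ∂ν) = (ν (Iic t)).toReal * ‖Φ t‖ := by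
        rw [MeasureTheory.integral_mul_const, integral_indicator_one measurableSet_Iic, measureReal_def]
      have h3 : (ν (Iic t)).toReal ≤ (ν univ).toReal :=
        ENNReal.toReal_mono (measure_ne_top ν univ) (measure_mono (subset_univ _))
      have : ‖∫ s, ‖U (t, s)‖ ∂ν‖ = ∫ s, ‖U (t, s)‖ ∂ν := by
        rw [Real.norm_eq_abs, abs_of_nonneg]
        exact integral_nonneg fun s => norm_nonneg _
      rw [this]
      calc (∫ s, ‖U (t, s)‖ ∂ν) ≤ (ν (Iic t)).toReal * ‖Φ t‖ := by rw [← h2]; exact h1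
        _ ≤ (ν univ).toReal * ‖Φ t‖ := by
            exact mul_le_mul_of_nonneg_right h3 (norm_nonneg _)
  -- rewrite F t * Φ t
  have hstep : (∫ t in Ioc a b, F t * Φ t) = ∫ t, (F a * Φ t + ∫ s, U (t, s) ∂ν) ∂μ₀ := by
    rw [hμ₀def]
    apply setIntegral_congr_fun measurableSet_Ioc
    intro t ht
    have hsub : Iic t ∩ Ioc a b = Ioc a t := by
      ext x
      simp only [mem_inter_iff, mem_Iic, mem_Ioc]
      exact ⟨fun ⟨h1, h2, _⟩ => ⟨h2, h1⟩, fun ⟨h1, h2⟩ => ⟨h2, h1, h2.trans ht.2⟩⟩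
    have : (∫ s, U (t, s) ∂ν) = (F t - F a) * Φ t := by
      rw [hUdef]
      simp only
      rw [MeasureTheory.integral_mul_const, integral_indicator_one measurableSet_Iic, measureReal_def, hνdef,
        Measure.restrict_apply measurableSet_Iic, hsub, F.measure_Ioc,
        ENNReal.toReal_ofReal (sub_nonneg.2 (hFm a t ht.1.le))]
    dsimp only
    rw [this]; ring
  rw [hstep, integral_add (hΦ.const_mul (F a)) (hU.integral_prod_left),
    MeasureTheory.integral_const_mul, hΦ0, mul_zero, zero_add,
    integral_integral_swap hU]
  -- bound the ν-integral
  have hbound : ∀ᵐ s ∂ν, ‖∫ t, U (t, s) ∂μ₀‖ ≤ C := by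
    rw [hνdef]
    filter_upwards [ae_restrict_mem measurableSet_Ioc] with s hs
    have hU_eq : ∀ t, U (t, s) = (Ici s).indicator Φ t := by
      intro t
      simp only [hUdef, Set.indicator_apply, mem_Iic, mem_Ici, Pi.one_apply]
      split_ifs <;> simp
    have h1 : (∫ t, U (t, s) ∂μ₀) = ∫ t in Ioc a b ∩ Ici s, Φ t := by
      rw [hμ₀def]
      simp_rw [hU_eq]
      exact setIntegral_indicator measurableSet_Ici
    have hset2 : Ioc a b ∩ Ici s = Icc s b := by
      ext x
      simp only [mem_inter_iff, mem_Ioc, mem_Icc, mem_Ici]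
      exact ⟨fun ⟨⟨_, h2⟩, h3⟩ => ⟨h3, h2⟩, fun ⟨h1, h2⟩ => ⟨⟨hs.1.trans_le h1, h2⟩, h1⟩⟩
    have hsplit : (∫ t in Ioc a s, Φ t) + ∫ t in Ioc s b, Φ t = ∫ t in Ioc a b, Φ t := by
      rw [← setIntegral_union (Ioc_disjoint_Ioc_of_le le_rfl) measurableSet_Ioc
        (hΦ.mono_set (Ioc_subset_Ioc_right hs.2)) (hΦ.mono_set (Ioc_subset_Ioc_left hs.1.le)),
        Ioc_union_Ioc_eq_Ioc hs.1.le hs.2]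
    rw [h1, hset2, integral_Icc_eq_integral_Ioc]
    have : (∫ t in Ioc s b, Φ t) = -∫ t in Ioc a s, Φ t := by
      rw [hΦ0] at hsplit; linarith
    rw [this, Real.norm_eq_abs, abs_neg]
    exact hP s ⟨hs.1.le, hs.2⟩
  have := norm_integral_le_of_norm_le_const hbound
  rw [Real.norm_eq_abs] at this
  refine this.trans ?_
  have hν : (ν univ).toReal = F b - F a := by
    rw [hνdef, Measure.restrict_apply_univ, F.measure_Ioc,
      ENNReal.toReal_ofReal (sub_nonneg.2 (hFm a b hab))]
  rw [measureReal_def, hν]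
  apply mul_le_mul_of_nonneg_left _ hC
  have hFb : F b ≤ m b := by
    rw [hFdef, hm.stieltjesFunction_eq]; exact hmb
  have hFa : m a ≤ F a := by
    rw [hFdef, hm.stieltjesFunction_eq]; exact hm.le_rightLim le_rfl
  linarith

end Stmt9Aux


open Stmt9Aux in
theorem stmt9 (f g : ℝ → ℝ) (a b u v : ℝ) (hau : a ≤ u) (huv : u < v) (hvb : v ≤ b)
    (hf : BoundedVariationOn f (Icc a b))
    (hg : MonotoneOn g (Icc a b)) :
    |cheb f g a v - cheb f g u b| ≤
      (1 / 4) * (((g v - g a) + (g b - g u)) / 2 +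
        |(g v + g u) / 2 - (g a + g b) / 2|) * totalVar f a b := by
  classical
  have hab : a ≤ b := hau.trans (huv.le.trans hvb)
  have hav : a < v := lt_of_le_of_lt hau huv
  have hub : u < b := lt_of_lt_of_le huv hvb
  have ha_mem : a ∈ Icc a b := ⟨le_rfl, hab⟩
  have hb_mem : b ∈ Icc a b := ⟨hab, le_rfl⟩
  have hu_mem : u ∈ Icc a b := ⟨hau, hub.le⟩
  have hv_mem : v ∈ Icc a b := ⟨hav.le, hvb⟩
  -- extended monotone version of g
  set gE : ℝ → ℝ := fun t => g (cl a b t) with hgEdef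
  have hgE : Monotone gE := ext_mono hab hg
  have hgE_eq : ∀ t ∈ Icc a b, g t = gE t := fun t ht => by
    simp only [hgEdef, cl_eq ht]
  -- Jordan decomposition of f
  have hlbv : LocallyBoundedVariationOn f (Icc a b) := fun x y _ _ => hf.mono inter_subset_left
  set vf : ℝ → ℝ := variationOnFromTo f (Icc a b) a with hvfdef
  have habs : ∀ x ∈ Icc a b, ∀ y ∈ Icc a b, x ≤ y → |f y - f x| ≤ vf y - vf x := by
    intro x hx y hy hxy
    have h1 : |f y - f x| ≤ variationOnFromTo f (Icc a b) x y := by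
      rw [variationOnFromTo.eq_of_le f _ hxy, ← Real.dist_eq, dist_comm, dist_edist]
      exact ENNReal.toReal_mono (hlbv x y hx hy)
        (eVariationOn.edist_le f ⟨hx, le_rfl, hxy⟩ ⟨hy, hxy, le_rfl⟩)
    have h2 : vf x + variationOnFromTo f (Icc a b) x y = vf y :=
      variationOnFromTo.add hlbv ha_mem hx hy
    linarith
  set p : ℝ → ℝ := fun t => (vf t + f t) / 2 with hpdef
  set q : ℝ → ℝ := fun t => (vf t - f t) / 2 with hqdef
  have hp : MonotoneOn p (Icc a b) := by
    intro x hx y hy hxy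
    have h := habs x hx y hy hxy
    rw [abs_le] at h
    simp only [hpdef]
    linarith [h.1]
  have hq : MonotoneOn q (Icc a b) := by
    intro x hx y hy hxy
    have h := habs x hx y hy hxy
    rw [abs_le] at h
    simp only [hqdef]
    linarith [h.2]
  set pE : ℝ → ℝ := fun t => p (cl a b t) with hpEdef
  set qE : ℝ → ℝ := fun t => q (cl a b t) with hqEdef
  have hpE : Monotone pE := ext_mono hab hp
  have hqE : Monotone qE := ext_mono hab hq
  set fE : ℝ → ℝ := fun t => pE t - qE t with hfEdef
  have hfE_eq : ∀ t ∈ Icc a b, f t = fE t := fun t ht => by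
    simp only [hfEdef, hpEdef, hqEdef, hpdef, hqdef, cl_eq ht]
    ring
  have hfEmeas : Measurable fE := hpE.measurable.sub hqE.measurable
  have hpEbdd : ∃ C, ∀ x, ‖pE x‖ ≤ C := by
    refine ⟨|p a| + |p b|, fun x => ?_⟩
    have h1 : p a ≤ pE x := hp ha_mem (cl_mem hab x) (cl_mem hab x).1
    have h2 : pE x ≤ p b := hp (cl_mem hab x) hb_mem (cl_mem hab x).2
    rw [Real.norm_eq_abs, abs_le]
    constructor <;>
      nlinarith [le_abs_self (p b), neg_abs_le (p a), abs_nonneg (p a), abs_nonneg (p b)]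
  have hqEbdd : ∃ C, ∀ x, ‖qE x‖ ≤ C := by
    refine ⟨|q a| + |q b|, fun x => ?_⟩
    have h1 : q a ≤ qE x := hq ha_mem (cl_mem hab x) (cl_mem hab x).1
    have h2 : qE x ≤ q b := hq (cl_mem hab x) hb_mem (cl_mem hab x).2
    rw [Real.norm_eq_abs, abs_le]
    constructor <;>
      nlinarith [le_abs_self (q b), neg_abs_le (q a), abs_nonneg (q a), abs_nonneg (q b)]
  have hfEbdd : ∃ C, ∀ x, ‖fE x‖ ≤ C := by
    obtain ⟨C1, h1⟩ := hpEbdd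
    obtain ⟨C2, h2⟩ := hqEbdd
    refine ⟨C1 + C2, fun x => ?_⟩
    simp only [hfEdef]
    exact (norm_sub_le _ _).trans (add_le_add (h1 x) (h2 x))
  -- the kernels
  set μ₁ : ℝ := (v - a)⁻¹ * ∫ s in Ioc a v, gE s with hμ₁def
  set μ₂ : ℝ := (b - u)⁻¹ * ∫ s in Ioc u b, gE s with hμ₂def
  set h₁ : ℝ → ℝ := fun t => (v - a)⁻¹ * (gE t - μ₁) with hh₁def
  set h₂ : ℝ → ℝ := fun t => (b - u)⁻¹ * (gE t - μ₂) with hh₂def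
  set Φ₁ : ℝ → ℝ := (Ioc a v).indicator h₁ with hΦ₁def
  set Φ₂ : ℝ → ℝ := (Ioc u b).indicator h₂ with hΦ₂def
  set Φ : ℝ → ℝ := fun t => Φ₁ t - Φ₂ t with hΦdef
  have hh₁int : ∀ α β : ℝ, IntegrableOn h₁ (Ioc α β) volume := fun α β =>
    ((intOn hgE α β).sub (intConst μ₁ α β)).const_mul _
  have hh₂int : ∀ α β : ℝ, IntegrableOn h₂ (Ioc α β) volume := fun α β =>
    ((intOn hgE α β).sub (intConst μ₂ α β)).const_mul _
  have hΦ₁int : IntegrableOn Φ₁ (Ioc a b) volume := (hh₁int a b).indicator measurableSet_Ioc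
  have hΦ₂int : IntegrableOn Φ₂ (Ioc a b) volume := (hh₂int a b).indicator measurableSet_Ioc
  have hΦint : IntegrableOn Φ (Ioc a b) volume := hΦ₁int.sub hΦ₂int
  have hh₁meas : Measurable h₁ := measurable_const.mul (hgE.measurable.sub measurable_const)
  have hh₂meas : Measurable h₂ := measurable_const.mul (hgE.measurable.sub measurable_const)
  have hΦmeas : Measurable Φ :=
    (hh₁meas.indicator measurableSet_Ioc).sub (hh₂meas.indicator measurableSet_Ioc)
  -- partial integrals of Φ₁ and Φ₂
  set X : ℝ := g v - g a with hXdef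
  set Y : ℝ := g b - g u with hYdef
  have hgEv : gE v = g v := (hgE_eq v hv_mem).symm
  have hgEa : gE a = g a := (hgE_eq a ha_mem).symm
  have hgEu : gE u = g u := (hgE_eq u hu_mem).symm
  have hgEb : gE b = g b := (hgE_eq b hb_mem).symm
  have hX : 0 ≤ X := sub_nonneg.2 (hg ha_mem hv_mem hav.le)
  have hY : 0 ≤ Y := sub_nonneg.2 (hg hu_mem hb_mem hub.le)
  have bound₁ : ∀ w, a ≤ w → w ≤ v →
      (-(X / 4) ≤ ∫ s in Ioc a w, h₁ s) ∧ (∫ s in Ioc a w, h₁ s) ≤ 0 := by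
    intro w hw1 hw2
    obtain ⟨hlo, hhi⟩ := core hgE hav hw1 hw2 hμ₁def
    have hinv : (0:ℝ) ≤ (v - a)⁻¹ := inv_nonneg.2 (by linarith)
    have hrw : (∫ s in Ioc a w, h₁ s) = (v - a)⁻¹ * ∫ s in Ioc a w, (gE s - μ₁) := by
      simp only [hh₁def]
      rw [MeasureTheory.integral_const_mul]
    have hone : (v - a)⁻¹ * (v - a) = 1 := inv_mul_cancel₀ (by linarith)
    constructor
    · have h5 := mul_le_mul_of_nonneg_left hlo hinv
      rw [hrw]
      have heq : (v - a)⁻¹ * -((v - a) * (gE v - gE a) / 4) = -(X / 4) := by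
        rw [hXdef, ← hgEv, ← hgEa,
          show (v - a)⁻¹ * -((v - a) * (gE v - gE a) / 4)
            = -((v - a)⁻¹ * (v - a) * ((gE v - gE a) / 4)) from by ring, hone, one_mul]
      linarith [heq ▸ h5]
    · have h5 := mul_le_mul_of_nonneg_left hhi hinv
      rw [hrw]
      linarith [h5, mul_zero ((v - a)⁻¹)]
  have bound₂ : ∀ w, u ≤ w → w ≤ b →
      (-(Y / 4) ≤ ∫ s in Ioc u w, h₂ s) ∧ (∫ s in Ioc u w, h₂ s) ≤ 0 := by
    intro w hw1 hw2
    obtain ⟨hlo, hhi⟩ := core hgE hub hw1 hw2 hμ₂def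
    have hinv : (0:ℝ) ≤ (b - u)⁻¹ := inv_nonneg.2 (by linarith)
    have hrw : (∫ s in Ioc u w, h₂ s) = (b - u)⁻¹ * ∫ s in Ioc u w, (gE s - μ₂) := by
      simp only [hh₂def]
      rw [MeasureTheory.integral_const_mul]
    have hone : (b - u)⁻¹ * (b - u) = 1 := inv_mul_cancel₀ (by linarith)
    constructor
    · have h5 := mul_le_mul_of_nonneg_left hlo hinv
      rw [hrw]
      have heq : (b - u)⁻¹ * -((b - u) * (gE b - gE u) / 4) = -(Y / 4) := by
        rw [hYdef, ← hgEb, ← hgEu,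
          show (b - u)⁻¹ * -((b - u) * (gE b - gE u) / 4)
            = -((b - u)⁻¹ * (b - u) * ((gE b - gE u) / 4)) from by ring, hone, one_mul]
      linarith [heq ▸ h5]
    · have h5 := mul_le_mul_of_nonneg_left hhi hinv
      rw [hrw]
      linarith [h5, mul_zero ((b - u)⁻¹)]
  have key₁ : ∀ t ∈ Icc a b, (∫ s in Ioc a t, Φ₁ s) = ∫ s in Ioc a (min t v), h₁ s := by
    intro t _
    rw [hΦ₁def, setIntegral_indicator measurableSet_Ioc, Set.Ioc_inter_Ioc, sup_idem]
  have key₂ : ∀ t ∈ Icc a b, (∫ s in Ioc a t, Φ₂ s) = ∫ s in Ioc u (max t u), h₂ s := by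
    intro t ht
    rw [hΦ₂def, setIntegral_indicator measurableSet_Ioc, Set.Ioc_inter_Ioc,
      sup_eq_right.2 hau, inf_eq_left.2 ht.2]
    rcases le_total t u with h | h
    · rw [Ioc_eq_empty (not_lt.2 h), max_eq_right h, Ioc_eq_empty (lt_irrefl u)]
    · rw [max_eq_left h]
  set M4 : ℝ := max X Y / 4 with hM4def
  have hM4 : 0 ≤ M4 := by
    rw [hM4def]
    have := hX.trans (le_max_left X Y)
    linarith
  have hP : ∀ t ∈ Icc a b, |∫ s in Ioc a t, Φ s| ≤ M4 := by
    intro t ht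
    have hsub : (∫ s in Ioc a t, Φ s) = (∫ s in Ioc a t, Φ₁ s) - ∫ s in Ioc a t, Φ₂ s := by
      rw [hΦdef]
      exact integral_sub (hΦ₁int.mono_set (Ioc_subset_Ioc_right ht.2))
        (hΦ₂int.mono_set (Ioc_subset_Ioc_right ht.2))
    have hb₁ := bound₁ (min t v) (le_min ht.1 hav.le) (min_le_right _ _)
    have hb₂ := bound₂ (max t u) (le_max_right _ _) (max_le ht.2 hub.le)
    rw [hsub, key₁ t ht, key₂ t ht, abs_le]
    constructor
    · have := le_max_left X Y
      rw [hM4def]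
      linarith [hb₁.1, hb₂.2]
    · have := le_max_right X Y
      rw [hM4def]
      linarith [hb₁.2, hb₂.1]
  have hz₁ : (∫ s in Ioc a v, h₁ s) = 0 := by
    simp only [hh₁def]
    rw [MeasureTheory.integral_const_mul, integral_sub (intOn hgE a v) (intConst μ₁ a v), intConstVal hav.le]
    have h6 : (v - a) * μ₁ = ∫ s in Ioc a v, gE s := by
      rw [hμ₁def, ← mul_assoc, mul_inv_cancel₀ (by linarith : v - a ≠ 0), one_mul]
    rw [h6, sub_self, mul_zero]
  have hz₂ : (∫ s in Ioc u b, h₂ s) = 0 := by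
    simp only [hh₂def]
    rw [MeasureTheory.integral_const_mul, integral_sub (intOn hgE u b) (intConst μ₂ u b), intConstVal hub.le]
    have h6 : (b - u) * μ₂ = ∫ s in Ioc u b, gE s := by
      rw [hμ₂def, ← mul_assoc, mul_inv_cancel₀ (by linarith : b - u ≠ 0), one_mul]
    rw [h6, sub_self, mul_zero]
  have hΦ0 : (∫ t in Ioc a b, Φ t) = 0 := by
    have h1 : (∫ s in Ioc a b, Φ₁ s) = 0 := by
      rw [key₁ b hb_mem, min_eq_right hvb, hz₁]
    have h2 : (∫ s in Ioc a b, Φ₂ s) = 0 := by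
      rw [key₂ b hb_mem, max_eq_left hub.le, hz₂]
    rw [hΦdef]
    rw [integral_sub hΦ₁int hΦ₂int, h1, h2, sub_zero]
  -- the identity: cheb difference equals ∫ fE * Φ
  have hIfE : ∀ α β : ℝ, IntegrableOn fE (Ioc α β) volume := fun α β =>
    ((intOn hpE α β).sub (intOn hqE α β))
  have hIfg : ∀ α β : ℝ, IntegrableOn (fun t => fE t * gE t) (Ioc α β) volume := fun α β =>
    (intOn hgE α β).bdd_mul hfEmeas.aestronglyMeasurable (Filter.Eventually.of_forall hfEbdd.choose_spec)
  have block : ∀ (α β : ℝ), α < β → Ioc α β ⊆ Icc a b → ∀ μc : ℝ,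
      μc = (β - α)⁻¹ * (∫ s in Ioc α β, gE s) →
      cheb f g α β = ∫ t in Ioc α β, fE t * ((β - α)⁻¹ * (gE t - μc)) := by
    intro α β hlt hsub μc hμc
    have hcongr : ∀ (F G : ℝ → ℝ), (∀ t ∈ Icc a b, F t = G t) →
        (∫ t in Ioc α β, F t) = ∫ t in Ioc α β, G t := fun F G h =>
      setIntegral_congr_fun measurableSet_Ioc (fun t ht => h t (hsub ht))
    unfold cheb
    rw [integral_of_le hlt.le, integral_of_le hlt.le, integral_of_le hlt.le]
    rw [hcongr _ (fun t => fE t * gE t)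
        (fun t ht => by rw [hfE_eq t ht, hgE_eq t ht]),
      hcongr f fE hfE_eq, hcongr g gE hgE_eq]
    have hexp : ∀ t, fE t * ((β - α)⁻¹ * (gE t - μc)) =
        (β - α)⁻¹ * (fE t * gE t) - ((β - α)⁻¹ * μc) * fE t := fun t => by ring
    rw [setIntegral_congr_fun measurableSet_Ioc (fun t _ => hexp t),
      integral_sub ((hIfg α β).const_mul _) ((hIfE α β).const_mul _),
      MeasureTheory.integral_const_mul, MeasureTheory.integral_const_mul, hμc]
    ring
  have ext₁ : (∫ t in Ioc a v, fE t * h₁ t) = ∫ t in Ioc a b, fE t * Φ₁ t := by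
    have h7 : ∀ t, fE t * Φ₁ t = (Ioc a v).indicator (fun j => fE j * h₁ j) t := fun t => by
      rw [hΦ₁def]
      exact (Set.indicator_mul_right _ _ _).symm
    rw [setIntegral_congr_fun (s := Ioc a b) measurableSet_Ioc (fun t _ => h7 t),
      setIntegral_indicator measurableSet_Ioc,
      Set.inter_eq_right.2 (Ioc_subset_Ioc_right hvb)]
  have ext₂ : (∫ t in Ioc u b, fE t * h₂ t) = ∫ t in Ioc a b, fE t * Φ₂ t := by
    have h7 : ∀ t, fE t * Φ₂ t = (Ioc u b).indicator (fun j => fE j * h₂ j) t := fun t => by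
      rw [hΦ₂def]
      exact (Set.indicator_mul_right _ _ _).symm
    rw [setIntegral_congr_fun (s := Ioc a b) measurableSet_Ioc (fun t _ => h7 t),
      setIntegral_indicator measurableSet_Ioc,
      Set.inter_eq_right.2 (Ioc_subset_Ioc_left hau)]
  have hfΦ₁int : IntegrableOn (fun t => fE t * Φ₁ t) (Ioc a b) volume :=
    hΦ₁int.bdd_mul hfEmeas.aestronglyMeasurable (Filter.Eventually.of_forall hfEbdd.choose_spec)
  have hfΦ₂int : IntegrableOn (fun t => fE t * Φ₂ t) (Ioc a b) volume :=
    hΦ₂int.bdd_mul hfEmeas.aestronglyMeasurable (Filter.Eventually.of_forall hfEbdd.choose_spec)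
  have hD : cheb f g a v - cheb f g u b = ∫ t in Ioc a b, fE t * Φ t := by
    have e₁ : cheb f g a v = ∫ t in Ioc a b, fE t * Φ₁ t := by
      rw [block a v hav (fun t ht => ⟨ht.1.le, ht.2.trans hvb⟩) μ₁ hμ₁def]
      exact ext₁
    have e₂ : cheb f g u b = ∫ t in Ioc a b, fE t * Φ₂ t := by
      rw [block u b hub (fun t ht => ⟨hau.trans ht.1.le, ht.2⟩) μ₂ hμ₂def]
      exact ext₂
    rw [e₁, e₂, ← integral_sub hfΦ₁int hfΦ₂int]
    refine setIntegral_congr_fun measurableSet_Ioc (fun t _ => ?_)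
    simp only [hΦdef]
    ring
  -- apply the Stieltjes bound to pE and qE
  have hclb1 : cl a b (b + 1) = b := by
    unfold cl
    rw [min_eq_right (le_trans (by linarith) (le_max_left (b + 1) a))]
  have hclb : cl a b b = b := cl_eq hb_mem
  have hcla : cl a b a = a := cl_eq ha_mem
  have hpEb1 : pE (b + 1) = pE b := by simp only [hpEdef, hclb1, hclb]
  have hqEb1 : qE (b + 1) = qE b := by simp only [hqEdef, hclb1, hclb]
  have hpE_rl : Function.rightLim pE b ≤ pE b :=
    hpEb1 ▸ hpE.rightLim_le (by linarith : b < b + 1)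
  have hqE_rl : Function.rightLim qE b ≤ qE b :=
    hqEb1 ▸ hqE.rightLim_le (by linarith : b < b + 1)
  have hSTp := ST9 hpE hab hpE_rl hΦmeas hΦint hΦ0 hM4 hP
  have hSTq := ST9 hqE hab hqE_rl hΦmeas hΦint hΦ0 hM4 hP
  have hsplit2 : (∫ t in Ioc a b, fE t * Φ t) =
      (∫ t in Ioc a b, pE t * Φ t) - ∫ t in Ioc a b, qE t * Φ t := by
    rw [← integral_sub (hΦint.bdd_mul hpE.measurable.aestronglyMeasurable (Filter.Eventually.of_forall hpEbdd.choose_spec))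
        (hΦint.bdd_mul hqE.measurable.aestronglyMeasurable (Filter.Eventually.of_forall hqEbdd.choose_spec))]
    refine setIntegral_congr_fun measurableSet_Ioc (fun t _ => ?_)
    simp only [hfEdef]
    ring
  have habs_total : |cheb f g a v - cheb f g u b| ≤ M4 * ((pE b - pE a) + (qE b - qE a)) := by
    rw [hD, hsplit2]
    have h8 : |(∫ t in Ioc a b, pE t * Φ t) - ∫ t in Ioc a b, qE t * Φ t| ≤
        |∫ t in Ioc a b, pE t * Φ t| + |∫ t in Ioc a b, qE t * Φ t| := by
      rw [sub_eq_add_neg]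
      exact (abs_add_le _ _).trans_eq (by rw [abs_neg])
    refine h8.trans ?_
    calc |∫ t in Ioc a b, pE t * Φ t| + |∫ t in Ioc a b, qE t * Φ t| ≤
        M4 * (pE b - pE a) + M4 * (qE b - qE a) := add_le_add hSTp hSTq
      _ = M4 * ((pE b - pE a) + (qE b - qE a)) := by ring
  have hvfb : vf b = totalVar f a b := by
    rw [hvfdef, variationOnFromTo.eq_of_le f _ hab, Set.inter_self]
    rfl
  have hvfa : vf a = 0 := by
    rw [hvfdef]
    exact variationOnFromTo.self f _ a
  have hsum : (pE b - pE a) + (qE b - qE a) = totalVar f a b := by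
    simp only [hpEdef, hqEdef, hclb, hcla, hpdef, hqdef]
    rw [← hvfb, hvfa]
    ring
  have h1 : (g v + g u) / 2 - (g a + g b) / 2 = (X - Y) / 2 := by
    rw [hXdef, hYdef]; ring
  rw [h1]
  have hcoef : (1 / 4 : ℝ) * ((X + Y) / 2 + |(X - Y) / 2|) = M4 := by
    rcases le_total X Y with h | h
    · rw [abs_of_nonpos (by linarith), hM4def, max_eq_right h]; ring
    · rw [abs_of_nonneg (by linarith), hM4def, max_eq_left h]; ring
  rw [hcoef, ← hsum]
  exact habs_total
end

section
/- Let f : [a,b] → ℝ be of bounded variation and g : [a,b] → ℝ be monotone nondecreasing. Then for all a ≤ u ≤ b, |T_a^u(f,g) − T_u^b(f,g)| ≤ { (g(b) − g(a))/2 + |g(u) − (g(a)+g(b))/2| }·V_a^b f, where the Čebyšev functionals on degenerate intervals are interpreted as limits (equivalently, the inequality holds for a < u < b). -/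
open MeasureTheory Set intervalIntegral

lemma bv_intervalIntegrable {f : ℝ → ℝ} {a b α β : ℝ}
    (hf : BoundedVariationOn f (Icc a b)) (h1 : a ≤ α) (h2 : α ≤ β) (h3 : β ≤ b) :
    IntervalIntegrable f volume α β := by
  obtain ⟨p, q, hp, hq, hpq⟩ :=
    hf.locallyBoundedVariationOn.exists_monotoneOn_sub_monotoneOn
  have hsub : uIcc α β ⊆ Icc a b := by
    rw [uIcc_of_le h2]; exact Icc_subset_Icc h1 h3
  have := ((hp.mono hsub).intervalIntegrable (μ := volume)).sub
    ((hq.mono hsub).intervalIntegrable (μ := volume))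
  rw [hpq]; exact this

lemma mono_intervalIntegrable {g : ℝ → ℝ} {a b α β : ℝ}
    (hg : MonotoneOn g (Icc a b)) (h1 : a ≤ α) (h2 : α ≤ β) (h3 : β ≤ b) :
    IntervalIntegrable g volume α β := by
  have hsub : uIcc α β ⊆ Icc a b := by
    rw [uIcc_of_le h2]; exact Icc_subset_Icc h1 h3
  exact (hg.mono hsub).intervalIntegrable (μ := volume)

lemma key_bound (f g : ℝ → ℝ) (a b : ℝ)
    (hf : BoundedVariationOn f (Icc a b)) (hg : MonotoneOn g (Icc a b))
    {α β : ℝ} (h1 : a ≤ α) (h2 : α < β) (h3 : β ≤ b) :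
    |cheb f g α β| ≤ totalVar f a b * ((g β - g α) / 2) := by
  have hd : (0:ℝ) < β - α := by linarith
  have hd' : β - α ≠ 0 := ne_of_gt hd
  set V : ℝ := totalVar f a b with hV
  have hV0 : 0 ≤ V := ENNReal.toReal_nonneg
  have hic : Icc α β ⊆ Icc a b := Icc_subset_Icc h1 h3
  have hif : IntervalIntegrable f volume α β := bv_intervalIntegrable hf h1 h2.le h3
  have hig : IntervalIntegrable g volume α β := mono_intervalIntegrable hg h1 h2.le h3
  -- integrability of the product
  have hαab : α ∈ Icc a b := ⟨h1, le_trans h2.le h3⟩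
  have hβab : β ∈ Icc a b := ⟨le_trans h1 h2.le, h3⟩
  have hgbd : ∀ t ∈ Icc α β, |g t| ≤ max |g α| |g β| := by
    intro t ht
    have h1' : g α ≤ g t := hg hαab (hic ht) ht.1
    have h2' : g t ≤ g β := hg (hic ht) hβab ht.2
    rcases abs_le.mp (le_refl |g α|) with _
    rcases le_or_gt 0 (g t) with h | h
    · calc |g t| = g t := abs_of_nonneg h
        _ ≤ g β := h2'
        _ ≤ |g β| := le_abs_self _
        _ ≤ _ := le_max_right _ _
    · calc |g t| = -g t := abs_of_neg h
        _ ≤ -g α := by linarith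
        _ ≤ |g α| := neg_le_abs _
        _ ≤ _ := le_max_left _ _
  have hifg : IntervalIntegrable (fun t => f t * g t) volume α β := by
    rw [intervalIntegrable_iff_integrableOn_Ioc_of_le h2.le] at hif hig ⊢
    have hmeas : AEStronglyMeasurable g (volume.restrict (Ioc α β)) := hig.1
    have := Integrable.bdd_mul hif (c := max |g α| |g β|) hmeas ?_
    · exact this.congr (by filter_upwards with t using mul_comm _ _)
    · filter_upwards [ae_restrict_mem measurableSet_Ioc] with t ht
      exact hgbd t (Ioc_subset_Icc_self ht)
  -- pointwise bound on f
  have hfd : ∀ s ∈ Icc a b, ∀ t ∈ Icc a b, |f s - f t| ≤ V := by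
    intro s hs t ht
    have h := eVariationOn.edist_le f hs ht
    have := ENNReal.toReal_mono hf h
    rwa [← dist_edist, Real.dist_eq] at this
  set F : ℝ := (β - α)⁻¹ * ∫ t in α..β, f t with hF
  have hFbd : ∀ t ∈ Icc α β, |f t - F| ≤ V := by
    intro t ht
    have hub : (∫ s in α..β, f s) ≤ ∫ _ in α..β, (f t + V) := by
      apply integral_mono_on h2.le hif (intervalIntegrable_const)
      intro s hs
      have := hfd s (hic hs) t (hic ht)
      have := abs_le.mp this
      linarith [this.1, this.2]
    have hlb : (∫ _ in α..β, (f t - V)) ≤ ∫ s in α..β, f s := by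
      apply integral_mono_on h2.le (intervalIntegrable_const) hif
      intro s hs
      have := abs_le.mp (hfd s (hic hs) t (hic ht))
      linarith [this.1, this.2]
    rw [intervalIntegral.integral_const] at hub hlb
    simp only [smul_eq_mul] at hub hlb
    have hinv : (0:ℝ) ≤ (β - α)⁻¹ := inv_nonneg.mpr hd.le
    have e1 : (β - α)⁻¹ * ((β - α) * (f t + V)) = f t + V := by
      rw [← mul_assoc, inv_mul_cancel₀ hd', one_mul]
    have e2 : (β - α)⁻¹ * ((β - α) * (f t - V)) = f t - V := by
      rw [← mul_assoc, inv_mul_cancel₀ hd', one_mul]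
    have hFub : F ≤ f t + V := by
      have := mul_le_mul_of_nonneg_left hub hinv
      rw [hF]; linarith
    have hFlb : f t - V ≤ F := by
      have := mul_le_mul_of_nonneg_left hlb hinv
      rw [hF]; linarith
    rw [abs_le]; constructor <;> linarith
  set μ : ℝ := (g α + g β) / 2 with hμ
  have hgb : ∀ t ∈ Icc α β, |g t - μ| ≤ (g β - g α) / 2 := by
    intro t ht
    have h1' : g α ≤ g t := hg hαab (hic ht) ht.1
    have h2' : g t ≤ g β := hg (hic ht) hβab ht.2
    rw [abs_le]; constructor <;> simp only [hμ] <;> linarith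
  have hgab : g α ≤ g β := hg hαab hβab (le_trans h2.le (le_refl β))
  -- Sonin identity
  have hi1 : IntervalIntegrable (fun t => f t * g t - μ * f t) volume α β :=
    hifg.sub (hif.const_mul μ)
  have hi2 : IntervalIntegrable (fun t => F * g t - F * μ) volume α β :=
    (hig.const_mul F).sub intervalIntegrable_const
  have hid : cheb f g α β = (β - α)⁻¹ * ∫ t in α..β, (f t - F) * (g t - μ) := by
    have e1 : ∀ t ∈ uIcc α β, (fun t => (f t - F) * (g t - μ)) t =
        (fun t => (f t * g t - μ * f t) - (F * g t - F * μ)) t := by intro t _; ring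
    rw [intervalIntegral.integral_congr e1,
      intervalIntegral.integral_sub hi1 hi2,
      intervalIntegral.integral_sub hifg (hif.const_mul μ),
      intervalIntegral.integral_sub (hig.const_mul F) intervalIntegrable_const,
      intervalIntegral.integral_const_mul, intervalIntegral.integral_const_mul,
      intervalIntegral.integral_const]
    simp only [cheb, hF, smul_eq_mul]
    field_simp
    ring
  have hC0 : 0 ≤ V * ((g β - g α) / 2) := by
    apply mul_nonneg hV0; linarith
  have hbd : |∫ t in α..β, (f t - F) * (g t - μ)| ≤ V * ((g β - g α) / 2) * |β - α| := by
    have := intervalIntegral.norm_integral_le_of_norm_le_const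
      (C := V * ((g β - g α) / 2)) (f := fun t => (f t - F) * (g t - μ))
      (a := α) (b := β) ?_
    · simpa using this
    · intro t ht
      rw [Set.uIoc_of_le h2.le] at ht
      have ht' : t ∈ Icc α β := Ioc_subset_Icc_self ht
      rw [Real.norm_eq_abs, abs_mul]
      exact mul_le_mul (hFbd t ht') (hgb t ht') (abs_nonneg _) hV0
  rw [hid, abs_mul, abs_inv, abs_of_pos hd]
  rw [abs_of_pos hd] at hbd
  calc (β - α)⁻¹ * |∫ t in α..β, (f t - F) * (g t - μ)|
      ≤ (β - α)⁻¹ * (V * ((g β - g α) / 2) * (β - α)) := by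
        exact mul_le_mul_of_nonneg_left hbd (inv_nonneg.mpr hd.le)
    _ = V * ((g β - g α) / 2) := by field_simp

theorem stmt10 (f g : ℝ → ℝ) (a b u : ℝ) (hau : a < u) (hub : u < b)
    (hf : BoundedVariationOn f (Icc a b))
    (hg : MonotoneOn g (Icc a b)) :
    |cheb f g a u - cheb f g u b| ≤
      ((g b - g a) / 2 + |g u - (g a + g b) / 2|) * totalVar f a b := by
  have hu : u ∈ Icc a b := ⟨hau.le, hub.le⟩
  have h1 := key_bound f g a b hf hg (le_refl a) hau hub.le
  have h2 := key_bound f g a b hf hg hau.le hub (le_refl b)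
  have hV0 : (0:ℝ) ≤ totalVar f a b := ENNReal.toReal_nonneg
  have habs : (0:ℝ) ≤ |g u - (g a + g b) / 2| := abs_nonneg _
  have := abs_sub (cheb f g a u) (cheb f g u b)
  calc |cheb f g a u - cheb f g u b| ≤ |cheb f g a u| + |cheb f g u b| := abs_sub _ _
    _ ≤ totalVar f a b * ((g u - g a) / 2) + totalVar f a b * ((g b - g u) / 2) := by
        linarith
    _ ≤ ((g b - g a) / 2 + |g u - (g a + g b) / 2|) * totalVar f a b := by nlinarith
end

section
/- Let f : [a,b] → ℝ be L-Lipschitz and g : [a,b] → ℝ be absolutely continuous with g' essentially bounded. Then for all a ≤ u < v ≤ b, |T_a^v(f,g) − T_u^b(f,g)| ≤ L·(((v-a)² + (b-u)²)/12)·‖g'‖_{∞,[a,b]}. Equivalently the bound equals L·([((b-a)−(v-u))]/6)·[1/4 + (((a+b)/2 − (u+v)/2)/((b-a)−(v-u)))²]·‖g'‖_∞ when v−u < b−a. -/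
open MeasureTheory Set intervalIntegral

private lemma lip_contOn {f : ℝ → ℝ} {L α β : ℝ} (hL : 0 ≤ L)
    (hfl : ∀ x ∈ Icc α β, ∀ y ∈ Icc α β, |f x - f y| ≤ L * |x - y|) :
    ContinuousOn f (Icc α β) := by
  have : LipschitzOnWith (Real.toNNReal L) f (Icc α β) := by
    apply LipschitzOnWith.of_dist_le_mul
    intro x hx y hy
    rw [Real.dist_eq, Real.dist_eq, Real.coe_toNNReal L hL]
    exact hfl x hx y hy
  exact this.continuousOn

private lemma cheb_bound_s11 (f g : ℝ → ℝ) (α β L K : ℝ) (hαβ : α < β)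
    (hL : 0 ≤ L) (hK : 0 ≤ K)
    (hfl : ∀ x ∈ Icc α β, ∀ y ∈ Icc α β, |f x - f y| ≤ L * |x - y|)
    (hgl : ∀ x ∈ Icc α β, ∀ y ∈ Icc α β, |g x - g y| ≤ K * |x - y|) :
    |cheb f g α β| ≤ L * K * (β - α) ^ 2 / 12 := by
  have hfc : ContinuousOn f (Icc α β) := lip_contOn hL hfl
  have hgc : ContinuousOn g (Icc α β) := lip_contOn hK hgl
  have hIcc : uIcc α β = Icc α β := uIcc_of_le hαβ.le
  have hfint : IntervalIntegrable f volume α β := by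
    apply ContinuousOn.intervalIntegrable; rwa [hIcc]
  have hgint : IntervalIntegrable g volume α β := by
    apply ContinuousOn.intervalIntegrable; rwa [hIcc]
  have hfgint : IntervalIntegrable (fun t => f t * g t) volume α β := by
    apply ContinuousOn.intervalIntegrable; rw [hIcc]; exact hfc.mul hgc
  set If := ∫ t in α..β, f t with hIf
  set Ig := ∫ t in α..β, g t with hIg
  set Ifg := ∫ t in α..β, f t * g t with hIfg
  have inner_eq : ∀ x : ℝ, (∫ y in α..β, (f x - f y) * (g x - g y))
      = (β - α) * (f x * g x) - f x * Ig - g x * If + Ifg := by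
    intro x
    have e : (fun y => (f x - f y) * (g x - g y))
        = fun y => f x * g x - f x * g y - g x * f y + f y * g y := by
      funext y; ring
    rw [e]
    rw [intervalIntegral.integral_add (((_root_.intervalIntegrable_const).sub
        (hgint.const_mul _)).sub (hfint.const_mul _)) hfgint,
      intervalIntegral.integral_sub ((_root_.intervalIntegrable_const).sub
        (hgint.const_mul _)) (hfint.const_mul _),
      intervalIntegral.integral_sub (_root_.intervalIntegrable_const) (hgint.const_mul _),
      intervalIntegral.integral_const, intervalIntegral.integral_const_mul,
      intervalIntegral.integral_const_mul]
    simp [smul_eq_mul]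
    rfl
  have hb : ∀ x ∈ Icc α β, |(β - α) * (f x * g x) - f x * Ig - g x * If + Ifg|
      ≤ L * K * (((x - α) ^ 3 + (β - x) ^ 3) / 3) := by
    intro x hx
    rw [← inner_eq x]
    have hpint : IntervalIntegrable (fun y => (f x - f y) * (g x - g y)) volume α β := by
      apply ContinuousOn.intervalIntegrable; rw [hIcc]
      exact (continuousOn_const.sub hfc).mul (continuousOn_const.sub hgc)
    have hqint : IntervalIntegrable (fun y => L * K * (x - y) ^ 2) volume α β :=
      (Continuous.intervalIntegrable (by fun_prop) _ _)
    have step1 : |∫ y in α..β, (f x - f y) * (g x - g y)|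
        ≤ ∫ y in α..β, |(f x - f y) * (g x - g y)| :=
      intervalIntegral.abs_integral_le_integral_abs hαβ.le
    have step2 : (∫ y in α..β, |(f x - f y) * (g x - g y)|)
        ≤ ∫ y in α..β, L * K * (x - y) ^ 2 := by
      apply intervalIntegral.integral_mono_on hαβ.le hpint.abs hqint
      intro y hy
      have h1 := hfl x hx y hy
      have h2 := hgl x hx y hy
      have h3 : |(f x - f y) * (g x - g y)| = |f x - f y| * |g x - g y| := abs_mul _ _
      rw [h3]
      calc |f x - f y| * |g x - g y| ≤ (L * |x - y|) * (K * |x - y|) :=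
            mul_le_mul h1 h2 (abs_nonneg _) (le_trans (abs_nonneg _) h1)
        _ = L * K * |x - y| ^ 2 := by ring
        _ = L * K * (x - y) ^ 2 := by rw [sq_abs]
    have step3 : (∫ y in α..β, L * K * (x - y) ^ 2)
        = L * K * (((x - α) ^ 3 + (β - x) ^ 3) / 3) := by
      rw [intervalIntegral.integral_const_mul]
      congr 1
      have e : (fun y : ℝ => (x - y) ^ 2) = fun y => (y - x) ^ 2 := by
        funext y; ring
      rw [e, intervalIntegral.integral_comp_sub_right (fun z => z ^ 2) x, integral_pow]
      push_cast
      ring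
    calc |∫ y in α..β, (f x - f y) * (g x - g y)|
        ≤ ∫ y in α..β, |(f x - f y) * (g x - g y)| := step1
      _ ≤ ∫ y in α..β, L * K * (x - y) ^ 2 := step2
      _ = L * K * (((x - α) ^ 3 + (β - x) ^ 3) / 3) := step3
  -- the outer integral of the closed form
  have hHint : IntervalIntegrable
      (fun x => (β - α) * (f x * g x) - f x * Ig - g x * If + Ifg) volume α β :=
    (((hfgint.const_mul _).sub (hfint.mul_const _)).sub (hgint.mul_const _)).add
      _root_.intervalIntegrable_const
  have houter : (∫ x in α..β, ((β - α) * (f x * g x) - f x * Ig - g x * If + Ifg))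
      = 2 * ((β - α) * Ifg - If * Ig) := by
    rw [intervalIntegral.integral_add (((hfgint.const_mul _).sub
        (hfint.mul_const _)).sub (hgint.mul_const _)) _root_.intervalIntegrable_const,
      intervalIntegral.integral_sub ((hfgint.const_mul _).sub
        (hfint.mul_const _)) (hgint.mul_const _),
      intervalIntegral.integral_sub (hfgint.const_mul _) (hfint.mul_const _),
      intervalIntegral.integral_const, intervalIntegral.integral_const_mul,
      intervalIntegral.integral_mul_const, intervalIntegral.integral_mul_const]
    simp only [smul_eq_mul]
    ring
  have hD : (0:ℝ) < β - α := sub_pos.mpr hαβ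
  have hcheb : cheb f g α β = (2 * (β - α) ^ 2)⁻¹
      * ∫ x in α..β, ((β - α) * (f x * g x) - f x * Ig - g x * If + Ifg) := by
    rw [houter]
    unfold cheb
    rw [← hIf, ← hIg, ← hIfg]
    field_simp
  have hboundint : IntervalIntegrable
      (fun x => L * K * (((x - α) ^ 3 + (β - x) ^ 3) / 3)) volume α β :=
    (Continuous.intervalIntegrable (by fun_prop) _ _)
  have habs : |∫ x in α..β, ((β - α) * (f x * g x) - f x * Ig - g x * If + Ifg)|
      ≤ ∫ x in α..β, L * K * (((x - α) ^ 3 + (β - x) ^ 3) / 3) :=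
    le_trans (intervalIntegral.abs_integral_le_integral_abs hαβ.le)
      (intervalIntegral.integral_mono_on hαβ.le hHint.abs hboundint hb)
  have hbval : (∫ x in α..β, L * K * (((x - α) ^ 3 + (β - x) ^ 3) / 3))
      = L * K * ((β - α) ^ 4 / 6) := by
    have e : (fun x : ℝ => L * K * (((x - α) ^ 3 + (β - x) ^ 3) / 3))
        = fun x => (L * K / 3) * ((x - α) ^ 3) + (L * K / 3) * ((x - β) ^ 3) * (-1) := by
      funext x; ring
    rw [e]
    rw [intervalIntegral.integral_add
        ((Continuous.intervalIntegrable (by fun_prop) _ _))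
        ((Continuous.intervalIntegrable (by fun_prop) _ _)),
      intervalIntegral.integral_mul_const, intervalIntegral.integral_const_mul,
      intervalIntegral.integral_const_mul,
      intervalIntegral.integral_comp_sub_right (fun z => z ^ 3) α,
      intervalIntegral.integral_comp_sub_right (fun z => z ^ 3) β,
      integral_pow, integral_pow]
    push_cast
    ring
  rw [hcheb, abs_mul, abs_of_nonneg (by positivity : (0:ℝ) ≤ (2 * (β - α) ^ 2)⁻¹)]
  calc (2 * (β - α) ^ 2)⁻¹ * |∫ x in α..β, ((β - α) * (f x * g x) - f x * Ig - g x * If + Ifg)|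
      ≤ (2 * (β - α) ^ 2)⁻¹ * (L * K * ((β - α) ^ 4 / 6)) := by
        apply mul_le_mul_of_nonneg_left _ (by positivity)
        rw [← hbval]; exact habs
    _ = L * K * (β - α) ^ 2 / 12 := by field_simp; ring

theorem stmt11 (f g g' : ℝ → ℝ) (a b u v L : ℝ) (hau : a ≤ u) (huv : u < v) (hvb : v ≤ b)
    (hL : 0 ≤ L)
    (hf : ∀ x ∈ Icc a b, ∀ y ∈ Icc a b, |f x - f y| ≤ L * |x - y|)
    (hg : ∀ x ∈ Icc a b, g x = g a + ∫ t in a..x, g' t)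
    (hg'i : IntervalIntegrable g' volume a b)
    (hg'b : MemLp g' ⊤ (volume.restrict (Icc a b))) :
    |cheb f g a v - cheb f g u b| ≤
      L * (((v - a) ^ 2 + (b - u) ^ 2) / 12) * supNorm g' a b := by
  set K := supNorm g' a b with hKdef
  have hK : 0 ≤ K := ENNReal.toReal_nonneg
  have hab : a ≤ b := hau.trans (huv.le.trans hvb)
  -- a.e. bound on g'
  have hlt : eLpNormEssSup g' (volume.restrict (Icc a b)) < ⊤ := by
    have := hg'b.2
    rwa [eLpNorm_exponent_top] at this
  have hae : ∀ᵐ t ∂(volume.restrict (Icc a b)), ‖g' t‖ ≤ K := by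
    filter_upwards [ae_le_eLpNormEssSup (f := g')
      (μ := volume.restrict (Icc a b))] with t ht
    have h1 := ENNReal.toReal_mono hlt.ne ht
    simpa [hKdef, supNorm, eLpNorm_exponent_top, coe_nnnorm] using h1
  -- g is K-Lipschitz on [a, b]
  have hglip : ∀ x ∈ Icc a b, ∀ y ∈ Icc a b, |g x - g y| ≤ K * |x - y| := by
    intro x hx y hy
    have hsub : ∀ c ∈ Icc a b, uIcc a c ⊆ uIcc a b := by
      intro c hc
      apply uIcc_subset_uIcc left_mem_uIcc
      rw [uIcc_of_le hab]; exact hc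
    have hgdiff : g x - g y = ∫ t in y..x, g' t := by
      rw [hg x hx, hg y hy, add_sub_add_left_eq_sub]
      exact intervalIntegral.integral_interval_sub_left
        (hg'i.mono_set (hsub x hx)) (hg'i.mono_set (hsub y hy))
    rw [hgdiff, ← Real.norm_eq_abs]
    have haesub : ∀ᵐ t ∂(volume.restrict (uIoc y x)), ‖g' t‖ ≤ K := by
      apply ae_restrict_of_ae_restrict_of_subset _ hae
      intro t ht
      exact ⟨(le_min hy.1 hx.1).trans ht.1.le, ht.2.trans (max_le hy.2 hx.2)⟩
    calc ‖∫ t in y..x, g' t‖ ≤ |∫ t in y..x, (K : ℝ)| :=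
          intervalIntegral.norm_integral_le_abs_of_norm_le haesub
            (_root_.intervalIntegrable_const)
      _ = K * |x - y| := by
          rw [intervalIntegral.integral_const, smul_eq_mul, abs_mul,
            abs_of_nonneg hK]; ring
  have hav : a < v := lt_of_le_of_lt hau huv
  have hub : u < b := huv.trans_le hvb
  have hs1 : Icc a v ⊆ Icc a b := Icc_subset_Icc le_rfl hvb
  have hs2 : Icc u b ⊆ Icc a b := Icc_subset_Icc hau le_rfl
  have B1 := cheb_bound_s11 f g a v L K hav hL hK
    (fun x hx y hy => hf x (hs1 hx) y (hs1 hy))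
    (fun x hx y hy => hglip x (hs1 hx) y (hs1 hy))
  have B2 := cheb_bound_s11 f g u b L K hub hL hK
    (fun x hx y hy => hf x (hs2 hx) y (hs2 hy))
    (fun x hx y hy => hglip x (hs2 hx) y (hs2 hy))
  calc |cheb f g a v - cheb f g u b| ≤ |cheb f g a v| + |cheb f g u b| :=
        abs_sub _ _
    _ ≤ L * K * (v - a) ^ 2 / 12 + L * K * (b - u) ^ 2 / 12 := add_le_add B1 B2
    _ = L * (((v - a) ^ 2 + (b - u) ^ 2) / 12) * K := by ring
end

section
/- Let f, g : [a,b] → ℝ be Lipschitz with constants L_f, L_g > 0. Then |T_a^{(a+b)/2}(f,g) − T_{(a+b)/2}^b(f,g)| ≤ (1/24)·L_f·L_g·(b-a)². -/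
open MeasureTheory Set intervalIntegral

lemma chebBound (f g : ℝ → ℝ) (α β Lf Lg : ℝ) (hαβ : α < β) (hLf : 0 ≤ Lf) (hLg : 0 ≤ Lg)
    (hf : ∀ x ∈ Icc α β, ∀ y ∈ Icc α β, |f x - f y| ≤ Lf * |x - y|)
    (hg : ∀ x ∈ Icc α β, ∀ y ∈ Icc α β, |g x - g y| ≤ Lg * |x - y|) :
    |cheb f g α β| ≤ Lf * Lg * (β - α) ^ 2 / 12 := by
  have hle : α ≤ β := hαβ.le
  have hcf : ContinuousOn f (Icc α β) := by
    refine (LipschitzOnWith.continuousOn (K := Real.toNNReal Lf) ?_)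
    rw [lipschitzOnWith_iff_dist_le_mul]
    intro x hx y hy
    simpa [Real.dist_eq, Real.coe_toNNReal _ hLf] using hf x hx y hy
  have hcg : ContinuousOn g (Icc α β) := by
    refine (LipschitzOnWith.continuousOn (K := Real.toNNReal Lg) ?_)
    rw [lipschitzOnWith_iff_dist_le_mul]
    intro x hx y hy
    simpa [Real.dist_eq, Real.coe_toNNReal _ hLg] using hg x hx y hy
  have huIcc : uIcc α β = Icc α β := uIcc_of_le hle
  have hif : IntervalIntegrable f volume α β :=
    (hcf.mono (by rw [huIcc])).intervalIntegrable
  have hig : IntervalIntegrable g volume α β :=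
    (hcg.mono (by rw [huIcc])).intervalIntegrable
  have hifg : IntervalIntegrable (fun t => f t * g t) volume α β :=
    ((hcf.mul hcg).mono (by rw [huIcc])).intervalIntegrable
  set I1 := ∫ t in α..β, f t * g t with hI1
  set If := ∫ t in α..β, f t with hIf
  set Ig := ∫ t in α..β, g t with hIg
  -- inner identity
  have hinner : ∀ x : ℝ, (∫ y in α..β, (f x - f y) * (g x - g y)) =
      (β - α) * (f x * g x) - f x * Ig - g x * If + I1 := by
    intro x
    have : (fun y => (f x - f y) * (g x - g y)) =
        fun y => f x * g x - f x * g y - g x * f y + f y * g y := by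
      funext y; ring
    rw [this]
    rw [intervalIntegral.integral_add (((_root_.intervalIntegrable_const).sub
        (hig.const_mul _)).sub (hif.const_mul _)) hifg,
      intervalIntegral.integral_sub ((_root_.intervalIntegrable_const).sub (hig.const_mul _))
        (hif.const_mul _),
      intervalIntegral.integral_sub _root_.intervalIntegrable_const (hig.const_mul _),
      intervalIntegral.integral_const, intervalIntegral.integral_const_mul,
      intervalIntegral.integral_const_mul]
    simp only [smul_eq_mul]; try ring
  -- double integral equals 2*D
  have hD : (∫ x in α..β, ∫ y in α..β, (f x - f y) * (g x - g y)) =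
      2 * ((β - α) * I1 - If * Ig) := by
    rw [show (fun x => ∫ y in α..β, (f x - f y) * (g x - g y)) =
        fun x => (β - α) * (f x * g x) - f x * Ig - g x * If + I1 from funext hinner]
    rw [intervalIntegral.integral_add ((((hifg.const_mul _)).sub
        (hif.mul_const _)).sub (hig.mul_const _)) _root_.intervalIntegrable_const,
      intervalIntegral.integral_sub ((hifg.const_mul _).sub (hif.mul_const _))
        (hig.mul_const _),
      intervalIntegral.integral_sub (hifg.const_mul _) (hif.mul_const _),
      intervalIntegral.integral_const_mul, intervalIntegral.integral_mul_const,
      intervalIntegral.integral_mul_const, intervalIntegral.integral_const]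
    simp only [smul_eq_mul]; try ring
  -- bound on double integral
  have hBval : ∀ x : ℝ, (∫ y in α..β, Lf * Lg * (x - y) ^ 2) =
      Lf * Lg * ((x - α) ^ 3 - (x - β) ^ 3) / 3 := by
    intro x
    rw [intervalIntegral.integral_const_mul]
    have : (fun y : ℝ => (x - y) ^ 2) = fun y => (fun t : ℝ => t ^ 2) (x - y) := rfl
    rw [this, intervalIntegral.integral_comp_sub_left (fun t : ℝ => t ^ 2) x,
      integral_pow]
    ring
  have hbd : |∫ x in α..β, ∫ y in α..β, (f x - f y) * (g x - g y)| ≤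
      |∫ x in α..β, Lf * Lg * ((x - α) ^ 3 - (x - β) ^ 3) / 3| := by
    rw [← Real.norm_eq_abs]
    apply intervalIntegral.norm_integral_le_abs_of_norm_le
    · apply ae_restrict_of_forall_mem measurableSet_uIoc
      intro x hx
      rw [uIoc_of_le hle] at hx
      have hx' : x ∈ Icc α β := ⟨hx.1.le, hx.2⟩
      have hBnn : 0 ≤ Lf * Lg * ((x - α) ^ 3 - (x - β) ^ 3) / 3 := by
        have h1 : (0:ℝ) ≤ (x - α) ^ 3 := pow_nonneg (by linarith [hx.1.le]) 3
        have h2 : (x - β) ^ 3 ≤ 0 := by nlinarith [hx.2, sq_nonneg (x - β)]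
        have h3 := mul_nonneg hLf hLg
        have h4 : (0:ℝ) ≤ (x - α) ^ 3 - (x - β) ^ 3 := by linarith
        positivity
      calc ‖∫ y in α..β, (f x - f y) * (g x - g y)‖
          ≤ |∫ y in α..β, Lf * Lg * (x - y) ^ 2| := ?_
        _ = Lf * Lg * ((x - α) ^ 3 - (x - β) ^ 3) / 3 := by
            rw [hBval x, abs_of_nonneg hBnn]
      apply intervalIntegral.norm_integral_le_abs_of_norm_le
      · apply ae_restrict_of_forall_mem measurableSet_uIoc
        intro y hy
        rw [uIoc_of_le hle] at hy
        have hy' : y ∈ Icc α β := ⟨hy.1.le, hy.2⟩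
        rw [Real.norm_eq_abs, abs_mul]
        calc |f x - f y| * |g x - g y| ≤ (Lf * |x - y|) * (Lg * |x - y|) :=
              mul_le_mul (hf x hx' y hy') (hg x hx' y hy') (abs_nonneg _)
                (mul_nonneg hLf (abs_nonneg _))
          _ = Lf * Lg * (x - y) ^ 2 := by rw [show Lf * |x - y| * (Lg * |x - y|) = Lf * Lg * |x - y| ^ 2 by ring, sq_abs]
      · exact (continuous_const.mul ((continuous_const.sub continuous_id).pow 2)).intervalIntegrable _ _
    · exact (Continuous.intervalIntegrable (by fun_prop) _ _)
  have hBint : (∫ x in α..β, Lf * Lg * ((x - α) ^ 3 - (x - β) ^ 3) / 3) =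
      Lf * Lg * (β - α) ^ 4 / 6 := by
    have h1 : (fun x : ℝ => Lf * Lg * ((x - α) ^ 3 - (x - β) ^ 3) / 3) =
        fun x => (Lf * Lg / 3) * (x - α) ^ 3 - (Lf * Lg / 3) * (x - β) ^ 3 := by
      funext x; ring
    rw [h1, intervalIntegral.integral_sub, intervalIntegral.integral_const_mul,
      intervalIntegral.integral_const_mul]
    · have e1 : (∫ x in α..β, (x - α) ^ 3) = ((β - α) ^ 4 - 0 ^ 4) / 4 := by
        rw [show (fun x : ℝ => (x - α) ^ 3) = fun x => (fun t : ℝ => t ^ 3) (x - α) from rfl,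
          intervalIntegral.integral_comp_sub_right (fun t : ℝ => t ^ 3) α, integral_pow]
        norm_num
      have e2 : (∫ x in α..β, (x - β) ^ 3) = (0 ^ 4 - (α - β) ^ 4) / 4 := by
        rw [show (fun x : ℝ => (x - β) ^ 3) = fun x => (fun t : ℝ => t ^ 3) (x - β) from rfl,
          intervalIntegral.integral_comp_sub_right (fun t : ℝ => t ^ 3) β, integral_pow]
        norm_num
      rw [e1, e2]; ring
    · exact (Continuous.intervalIntegrable (by fun_prop) _ _)
    · exact (Continuous.intervalIntegrable (by fun_prop) _ _)
  have hDbd : |2 * ((β - α) * I1 - If * Ig)| ≤ Lf * Lg * (β - α) ^ 4 / 6 := by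
    rw [← hD]
    calc _ ≤ |∫ x in α..β, Lf * Lg * ((x - α) ^ 3 - (x - β) ^ 3) / 3| := hbd
      _ = Lf * Lg * (β - α) ^ 4 / 6 := by
          rw [hBint, abs_of_nonneg (by positivity)]
  have hcheb : cheb f g α β = ((β - α) * I1 - If * Ig) / (β - α) ^ 2 := by
    unfold cheb
    have h0 : β - α ≠ 0 := by linarith
    field_simp
    ring
  rw [hcheb, abs_div, abs_of_nonneg (by positivity : (0:ℝ) ≤ (β - α) ^ 2)]
  rw [div_le_iff₀ (pow_pos (by linarith) 2)]
  rw [abs_mul] at hDbd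
  have h2 : |(2:ℝ)| = 2 := by norm_num
  rw [h2] at hDbd
  nlinarith [abs_nonneg ((β - α) * I1 - If * Ig)]

theorem stmt15 (f g : ℝ → ℝ) (a b Lf Lg : ℝ) (hab : a < b)
    (hLf : 0 < Lf) (hLg : 0 < Lg)
    (hf : ∀ x ∈ Icc a b, ∀ y ∈ Icc a b, |f x - f y| ≤ Lf * |x - y|)
    (hg : ∀ x ∈ Icc a b, ∀ y ∈ Icc a b, |g x - g y| ≤ Lg * |x - y|) :
    |cheb f g a ((a + b) / 2) - cheb f g ((a + b) / 2) b| ≤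
      (1 / 24) * Lf * Lg * (b - a) ^ 2 := by
  set m := (a + b) / 2 with hm
  have ham : a < m := by rw [hm]; linarith
  have hmb : m < b := by rw [hm]; linarith
  have hs1 : Icc a m ⊆ Icc a b := Icc_subset_Icc le_rfl hmb.le
  have hs2 : Icc m b ⊆ Icc a b := Icc_subset_Icc ham.le le_rfl
  have h1 := chebBound f g a m Lf Lg ham hLf.le hLg.le
    (fun x hx y hy => hf x (hs1 hx) y (hs1 hy))
    (fun x hx y hy => hg x (hs1 hx) y (hs1 hy))
  have h2 := chebBound f g m b Lf Lg hmb hLf.le hLg.le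
    (fun x hx y hy => hf x (hs2 hx) y (hs2 hy))
    (fun x hx y hy => hg x (hs2 hx) y (hs2 hy))
  have htri := abs_sub (cheb f g a m) (cheb f g m b)
  have e1 : (m - a) ^ 2 = (b - a) ^ 2 / 4 := by rw [hm]; ring
  have e2 : (b - m) ^ 2 = (b - a) ^ 2 / 4 := by rw [hm]; ring
  rw [e1] at h1; rw [e2] at h2
  calc |cheb f g a m - cheb f g m b| ≤ |cheb f g a m| + |cheb f g m b| := abs_sub _ _
    _ ≤ Lf * Lg * ((b - a) ^ 2 / 4) / 12 + Lf * Lg * ((b - a) ^ 2 / 4) / 12 := by linarith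
    _ = (1 / 24) * Lf * Lg * (b - a) ^ 2 := by ring
end
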